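/- arXiv:2503.04480 — 4 statements merged into one kernel-verified Lean document; each statement's English description precedes it below -/
import Mathlib

section
/- The Hessian of the log-partition function equals the covariance matrix of the sufficient statistic, and is therefore positive semi-definite: fix w₀ ∈ ℝⁿ with 0 < Z(w₀) < ∞, and suppose there exists a neighborhood U of w₀ and a π-integrable function G on Θ with exp(⟪w, f(θ)⟫)·(1 + ‖f(θ)‖ + ‖f(θ)‖²) ≤ G(θ) for all w ∈ U and π-a.e. θ (justifying twice differentiating under the integral sign). Then w ↦ log Z(w) is twice differentiable at w₀ with Hessian ∇² log Z(w₀) = Cov_{π_{w₀}}(f, f), the n×n matrix with entries ∫ fᵢfⱼ dπ_{w₀} − (∫ fᵢ dπ_{w₀})(∫ fⱼ dπ_{w₀}); in particular this Hessian is a positive semi-definite matrix. -/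
open MeasureTheory
open scoped ENNReal RealInnerProductSpace BigOperators

lemma aux_withDensity {Θ : Type*} [MeasurableSpace Θ] (P : Measure Θ) {E : Type*}
    [NormedAddCommGroup E] [NormedSpace ℝ E] {ρ : Θ → ℝ} (hρ : Measurable ρ)
    (hρ0 : ∀ θ, 0 ≤ ρ θ) (φ : Θ → E) :
    ∫ θ, φ θ ∂(P.withDensity fun θ => ENNReal.ofReal (ρ θ)) = ∫ θ, ρ θ • φ θ ∂P := by
  have h : (fun θ => ENNReal.ofReal (ρ θ)) = fun θ => ((ρ θ).toNNReal : ℝ≥0∞) := rfl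
  rw [h, integral_withDensity_eq_integral_smul hρ.real_toNNReal]
  refine integral_congr_ae (Filter.Eventually.of_forall fun θ => ?_)
  show (ρ θ).toNNReal • φ θ = ρ θ • φ θ
  rw [NNReal.smul_def, Real.coe_toNNReal _ (hρ0 θ)]

lemma aux_abs_apply_le_norm {n : ℕ} (x : EuclideanSpace ℝ (Fin n)) (i : Fin n) :
    |x i| ≤ ‖x‖ := by
  rw [EuclideanSpace.norm_eq, ← Real.sqrt_sq_eq_abs]
  apply Real.sqrt_le_sqrt
  have := Finset.single_le_sum (f := fun j => ‖x j‖ ^ 2)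
    (fun j _ => sq_nonneg _) (Finset.mem_univ i)
  simpa [Real.norm_eq_abs, sq_abs] using this

set_option maxHeartbeats 2000000 in
set_option synthInstance.maxHeartbeats 1000000 in
/-- under a domination condition justifying twice differentiating
under the integral sign, `log Z` is twice differentiable at `w₀`: its gradient
at `w₀` is `∫ f dP_{w₀}`, the gradient map `w ↦ ∫ f dP_w` is differentiable at
`w₀` with derivative given by the covariance matrix
`M i j = ∫ fᵢ fⱼ dP_{w₀} − (∫ fᵢ dP_{w₀})(∫ fⱼ dP_{w₀})` of the sufficient
statistic under the tainted posterior; in particular `M` is positive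
semi-definite. -/
theorem hessian_logPartition {n : ℕ} {Θ : Type*} [MeasurableSpace Θ]
    (P : Measure Θ) [IsProbabilityMeasure P]
    (f : Θ → EuclideanSpace ℝ (Fin n)) (hf : Measurable f)
    (Z : EuclideanSpace ℝ (Fin n) → ℝ≥0∞)
    (hZ : ∀ w, Z w = ∫⁻ θ, ENNReal.ofReal (Real.exp ⟪w, f θ⟫) ∂P)
    (Pw : EuclideanSpace ℝ (Fin n) → Measure Θ)
    (hPw : ∀ w, Pw w = P.withDensity fun θ =>
      ENNReal.ofReal (Real.exp ⟪w, f θ⟫ / (Z w).toReal))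
    (w₀ : EuclideanSpace ℝ (Fin n)) (hpos : 0 < Z w₀) (hfin : Z w₀ < ⊤)
    (U : Set (EuclideanSpace ℝ (Fin n))) (hU : U ∈ nhds w₀)
    (G : Θ → ℝ) (hG : Integrable G P)
    (hdom : ∀ w ∈ U, ∀ᵐ θ ∂P,
      Real.exp ⟪w, f θ⟫ * (1 + ‖f θ‖ + ‖f θ‖ ^ 2) ≤ G θ)
    (M : Matrix (Fin n) (Fin n) ℝ)
    (hM : ∀ i j, M i j =
      (∫ θ, f θ i * f θ j ∂(Pw w₀)) -
        (∫ θ, f θ i ∂(Pw w₀)) * ∫ θ, f θ j ∂(Pw w₀)) :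
    HasGradientAt (fun w => Real.log (Z w).toReal) (∫ θ, f θ ∂(Pw w₀)) w₀ ∧
      HasFDerivAt (fun w => ∫ θ, f θ ∂(Pw w))
        (LinearMap.toContinuousLinearMap (Matrix.toEuclideanLin M)) w₀ ∧
      M.PosSemidef := by
  classical
  set g : EuclideanSpace ℝ (Fin n) → Θ → ℝ := fun w θ => Real.exp ⟪w, f θ⟫ with hgdef
  have hgpos : ∀ w θ, 0 < g w θ := fun w θ => Real.exp_pos _
  -- measurability of g
  have hgc : ∀ w, Continuous fun v : EuclideanSpace ℝ (Fin n) => Real.exp ⟪w, v⟫ :=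
    fun w => Real.continuous_exp.comp (Continuous.inner continuous_const continuous_id)
  have hgm : ∀ w, Measurable (g w) := fun w => ((hgc w).measurable).comp hf
  have hfaem : AEStronglyMeasurable f P := hf.aestronglyMeasurable
  have hcomp : ∀ {E : Type} [NormedAddCommGroup E]
      (φ : EuclideanSpace ℝ (Fin n) → E), Continuous φ →
      AEStronglyMeasurable (fun θ => φ (f θ)) P :=
    fun φ hφ => hφ.comp_aestronglyMeasurable hfaem
  -- ball inside U
  obtain ⟨ε, εpos, hball⟩ : ∃ ε > 0, Metric.ball w₀ ε ⊆ U := Metric.mem_nhds_iff.mp hU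
  have hw₀ : w₀ ∈ Metric.ball w₀ ε := Metric.mem_ball_self εpos
  -- swap quantifiers in the domination hypothesis
  have hdom' : ∀ᵐ θ ∂P, ∀ w ∈ Metric.ball w₀ ε,
      g w θ * (1 + ‖f θ‖ + ‖f θ‖ ^ 2) ≤ G θ := by
    obtain ⟨t, hts, htc, htd⟩ :=
      (TopologicalSpace.IsSeparable.of_separableSpace
        (Metric.ball w₀ ε)).exists_countable_dense_subset
    have h1 : ∀ᵐ θ ∂P, ∀ w ∈ t, g w θ * (1 + ‖f θ‖ + ‖f θ‖ ^ 2) ≤ G θ :=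
      (ae_ball_iff htc).mpr fun w hw => hdom w (hball (hts hw))
    filter_upwards [h1] with θ hθ w hw
    have hcl : IsClosed {w : EuclideanSpace ℝ (Fin n) |
        g w θ * (1 + ‖f θ‖ + ‖f θ‖ ^ 2) ≤ G θ} := by
      apply isClosed_le _ continuous_const
      exact ((Real.continuous_exp.comp
        (Continuous.inner continuous_id continuous_const)).mul continuous_const)
    exact closure_minimal (fun v hv => hθ v hv) hcl (htd hw)
  -- individual bounds
  have hbounds : ∀ᵐ θ ∂P, ∀ w ∈ Metric.ball w₀ ε,
      g w θ ≤ G θ ∧ g w θ * ‖f θ‖ ≤ G θ ∧ g w θ * ‖f θ‖ ^ 2 ≤ G θ := by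
    filter_upwards [hdom'] with θ h w hw
    have h1 := h w hw
    have h2 := hgpos w θ
    have h3 := norm_nonneg (f θ)
    refine ⟨by nlinarith, by nlinarith, by nlinarith⟩
  -- a convenient integrability helper
  have hIntG : ∀ (C : ℝ) (φ : Θ → ℝ), AEStronglyMeasurable φ P →
      (∀ᵐ θ ∂P, |φ θ| ≤ C * G θ) → Integrable φ P := by
    intro C φ hm hb
    exact Integrable.mono' (hG.const_mul C) hm (by simpa [Real.norm_eq_abs] using hb)
  -- pointwise derivative of g in w
  have hgdiff : ∀ (w : EuclideanSpace ℝ (Fin n)) (θ : Θ),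
      HasFDerivAt (fun w => g w θ) (g w θ • innerSL ℝ (f θ)) w := by
    intro w θ
    have h1 : HasFDerivAt (fun w : EuclideanSpace ℝ (Fin n) => ⟪w, f θ⟫)
        (innerSL ℝ (f θ)) w := by
      have h2 := (innerSL ℝ (f θ)).hasFDerivAt (x := w)
      have heq : (fun w : EuclideanSpace ℝ (Fin n) => ⟪w, f θ⟫)
          = fun w => innerSL ℝ (f θ) w := funext fun w => real_inner_comm _ _
      rw [heq]; exact h2
    simpa [hgdef, Function.comp_def] using
      (Real.hasDerivAt_exp ⟪w, f θ⟫).comp_hasFDerivAt w h1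
  -- norms of the derivative candidates
  have hnorm1 : ∀ w θ, ‖g w θ • innerSL ℝ (f θ)‖ = g w θ * ‖f θ‖ := by
    intro w θ
    rw [norm_smul (g w θ) (innerSL ℝ (f θ)), innerSL_apply_norm, Real.norm_eq_abs, abs_of_pos (hgpos w θ)]
  have hnorm2 : ∀ w θ, ‖(g w θ • innerSL ℝ (f θ)).smulRight (f θ)‖
      = g w θ * ‖f θ‖ ^ 2 := by
    intro w θ
    rw [ContinuousLinearMap.norm_smulRight_apply, hnorm1, sq]; ring
  -- the real partition function
  set F : EuclideanSpace ℝ (Fin n) → ℝ := fun w => ∫ θ, g w θ ∂P with hFdef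
  -- integrabilities
  have hIg : ∀ w ∈ Metric.ball w₀ ε, Integrable (g w) P := by
    intro w hw
    refine hIntG 1 _ (hcomp _ (hgc w)) ?_
    filter_upwards [hbounds] with θ h
    rw [abs_of_pos (hgpos w θ), one_mul]; exact (h w hw).1
  have hIgf : ∀ w ∈ Metric.ball w₀ ε, Integrable (fun θ => g w θ • f θ) P := by
    intro w hw
    have hm : AEStronglyMeasurable (fun θ => g w θ • f θ) P :=
      hcomp (fun v => Real.exp ⟪w, v⟫ • v) ((hgc w).smul continuous_id)
    refine Integrable.mono' (hG.const_mul 1) hm ?_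
    filter_upwards [hbounds] with θ h
    rw [norm_smul, Real.norm_eq_abs, abs_of_pos (hgpos w θ), one_mul]
    exact (h w hw).2.1
  have hIF₁ : Integrable (fun θ => g w₀ θ • innerSL ℝ (f θ)) P := by
    have hm : AEStronglyMeasurable (fun θ => g w₀ θ • innerSL ℝ (f θ)) P :=
      hcomp (fun v => Real.exp ⟪w₀, v⟫ • innerSL ℝ v)
        ((hgc w₀).smul (innerSL ℝ).continuous)
    refine Integrable.mono' (hG.const_mul 1) hm ?_
    filter_upwards [hbounds] with θ h
    rw [hnorm1, one_mul]; exact (h w₀ hw₀).2.1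
  have hIF₂ : Integrable (fun θ => (g w₀ θ • innerSL ℝ (f θ)).smulRight (f θ)) P := by
    have hm : AEStronglyMeasurable
        (fun θ => (g w₀ θ • innerSL ℝ (f θ)).smulRight (f θ)) P := by
      refine hcomp (fun v => (Real.exp ⟪w₀, v⟫ • innerSL ℝ v).smulRight v) ?_
      exact (isBoundedBilinearMap_smulRight (𝕜 := ℝ)).continuous.comp
        (((hgc w₀).smul (innerSL ℝ).continuous).prodMk continuous_id)
    refine Integrable.mono' (hG.const_mul 1) hm ?_
    filter_upwards [hbounds] with θ h
    rw [hnorm2, one_mul]; exact (h w₀ hw₀).2.2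
  have habs : ∀ (θ : Θ) (i : Fin n), |f θ i| ≤ ‖f θ‖ := fun θ i =>
    aux_abs_apply_le_norm (f θ) i
  have hprojc : ∀ i : Fin n, Continuous fun v : EuclideanSpace ℝ (Fin n) => v i :=
    fun i => (EuclideanSpace.proj i).continuous
  have hIgfi : ∀ i, Integrable (fun θ => g w₀ θ * f θ i) P := by
    intro i
    refine hIntG 1 _ (hcomp (fun v => Real.exp ⟪w₀, v⟫ * v i)
      ((hgc w₀).mul (hprojc i))) ?_
    filter_upwards [hbounds] with θ h
    rw [abs_mul, abs_of_pos (hgpos w₀ θ), one_mul]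
    calc g w₀ θ * |f θ i| ≤ g w₀ θ * ‖f θ‖ :=
          mul_le_mul_of_nonneg_left (habs θ i) (hgpos w₀ θ).le
      _ ≤ G θ := (h w₀ hw₀).2.1
  have hIgfij : ∀ i j, Integrable (fun θ => g w₀ θ * (f θ i * f θ j)) P := by
    intro i j
    refine hIntG 1 _ (hcomp (fun v => Real.exp ⟪w₀, v⟫ * (v i * v j))
      ((hgc w₀).mul ((hprojc i).mul (hprojc j)))) ?_
    filter_upwards [hbounds] with θ h
    rw [abs_mul, abs_of_pos (hgpos w₀ θ), one_mul, abs_mul]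
    calc g w₀ θ * (|f θ i| * |f θ j|) ≤ g w₀ θ * (‖f θ‖ * ‖f θ‖) := by
          apply mul_le_mul_of_nonneg_left _ (hgpos w₀ θ).le
          exact mul_le_mul (habs θ i) (habs θ j) (abs_nonneg _) (norm_nonneg _)
      _ = g w₀ θ * ‖f θ‖ ^ 2 := by ring
      _ ≤ G θ := (h w₀ hw₀).2.2
  -- positivity and finiteness of F on the ball
  have hFpos : ∀ w ∈ Metric.ball w₀ ε, 0 < F w := by
    intro w hw
    rw [hFdef]
    refine (integral_pos_iff_support_of_nonneg_ae
      (Filter.Eventually.of_forall fun θ => (hgpos w θ).le) (hIg w hw)).mpr ?_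
    have hsupp : Function.support (g w) = Set.univ :=
      Set.eq_univ_iff_forall.mpr fun θ => (hgpos w θ).ne'
    rw [hsupp]
    simp
  have hZF : ∀ w ∈ Metric.ball w₀ ε, (Z w).toReal = F w := by
    intro w hw
    have : Z w = ENNReal.ofReal (F w) := by
      rw [hZ w, ← ofReal_integral_eq_lintegral_ofReal (hIg w hw)
        (Filter.Eventually.of_forall fun θ => (hgpos w θ).le)]
    rw [this, ENNReal.toReal_ofReal (hFpos w hw).le]
  -- derivative of F
  have hFd : HasFDerivAt F (∫ θ, g w₀ θ • innerSL ℝ (f θ) ∂P) w₀ := by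
    apply hasFDerivAt_integral_of_dominated_of_fderiv_le
      (F' := fun w θ => g w θ • innerSL ℝ (f θ)) (bound := G) (Metric.ball_mem_nhds w₀ εpos)
    · exact Filter.Eventually.of_forall fun w => hcomp _ (hgc w)
    · exact hIg w₀ hw₀
    · exact hIF₁.aestronglyMeasurable
    · filter_upwards [hbounds] with θ h w hw
      rw [hnorm1]; exact (h w hw).2.1
    · exact hG
    · exact Filter.Eventually.of_forall fun θ w _ => hgdiff w θ
  -- the vector-valued numerator and its derivative
  set V : EuclideanSpace ℝ (Fin n) → EuclideanSpace ℝ (Fin n) :=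
    fun w => ∫ θ, g w θ • f θ ∂P with hVdef
  have hVd : HasFDerivAt V
      (∫ θ, (g w₀ θ • innerSL ℝ (f θ)).smulRight (f θ) ∂P) w₀ := by
    apply hasFDerivAt_integral_of_dominated_of_fderiv_le
      (F' := fun w θ => (g w θ • innerSL ℝ (f θ)).smulRight (f θ)) (bound := G) (Metric.ball_mem_nhds w₀ εpos)
    · exact Filter.Eventually.of_forall fun w =>
        hcomp (fun v => Real.exp ⟪w, v⟫ • v) ((hgc w).smul continuous_id)
    · exact hIgf w₀ hw₀
    · exact hIF₂.aestronglyMeasurable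
    · filter_upwards [hbounds] with θ h w hw
      rw [hnorm2]; exact (h w hw).2.2
    · exact hG
    · exact Filter.Eventually.of_forall fun θ w _ => (hgdiff w θ).smul_const (f θ)
  -- expressing integrals over the tainted posterior as weighted integrals over P
  have key : ∀ w ∈ Metric.ball w₀ ε, ∫ θ, f θ ∂(Pw w) = (F w)⁻¹ • V w := by
    intro w hw
    rw [hPw w, hZF w hw,
      aux_withDensity P ((hgm w).div_const (F w))
        (fun θ => div_nonneg (hgpos w θ).le (hFpos w hw).le) f,
      hVdef, ← integral_smul]
    refine integral_congr_ae (Filter.Eventually.of_forall fun θ => ?_)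
    show (g w θ / F w) • f θ = (F w)⁻¹ • g w θ • f θ
    rw [smul_smul, div_eq_inv_mul]
  have keyfi : ∀ i, ∫ θ, f θ i ∂(Pw w₀)
      = (F w₀)⁻¹ * ∫ θ, g w₀ θ * f θ i ∂P := by
    intro i
    rw [hPw w₀, hZF w₀ hw₀,
      aux_withDensity P ((hgm w₀).div_const (F w₀))
        (fun θ => div_nonneg (hgpos w₀ θ).le (hFpos w₀ hw₀).le) (fun θ => f θ i),
      ← integral_const_mul]
    refine integral_congr_ae (Filter.Eventually.of_forall fun θ => ?_)
    show (g w₀ θ / F w₀) • f θ i = (F w₀)⁻¹ * (g w₀ θ * f θ i)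
    rw [smul_eq_mul]; ring
  have keyfij : ∀ i j, ∫ θ, f θ i * f θ j ∂(Pw w₀)
      = (F w₀)⁻¹ * ∫ θ, g w₀ θ * (f θ i * f θ j) ∂P := by
    intro i j
    rw [hPw w₀, hZF w₀ hw₀,
      aux_withDensity P ((hgm w₀).div_const (F w₀))
        (fun θ => div_nonneg (hgpos w₀ θ).le (hFpos w₀ hw₀).le)
        (fun θ => f θ i * f θ j),
      ← integral_const_mul]
    refine integral_congr_ae (Filter.Eventually.of_forall fun θ => ?_)
    show (g w₀ θ / F w₀) • (f θ i * f θ j) = (F w₀)⁻¹ * (g w₀ θ * (f θ i * f θ j))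
    rw [smul_eq_mul]; ring
  -- abbreviations
  set J : Fin n → ℝ := fun i => ∫ θ, g w₀ θ * f θ i ∂P with hJdef
  set I : Fin n → Fin n → ℝ := fun i j => ∫ θ, g w₀ θ * (f θ i * f θ j) ∂P with hIdef
  have hIsym : ∀ i j, I i j = I j i := by
    intro i j
    refine integral_congr_ae (Filter.Eventually.of_forall fun θ => ?_)
    ring_nf
  have hM' : ∀ i j, M i j
      = (F w₀)⁻¹ * I i j - ((F w₀)⁻¹ * J i) * ((F w₀)⁻¹ * J j) := by
    intro i j
    rw [hM i j, keyfij i j, keyfi i, keyfi j]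
  have hVj : ∀ j, V w₀ j = J j := by
    intro j
    have h := ((EuclideanSpace.proj (𝕜 := ℝ) j).integral_comp_comm
      (hIgf w₀ hw₀)).symm
    have h2 : V w₀ j = ∫ θ, (g w₀ θ • f θ) j ∂P := h
    rw [h2]
    refine integral_congr_ae (Filter.Eventually.of_forall fun θ => ?_)
    show (g w₀ θ • f θ) j = g w₀ θ * f θ j
    rw [PiLp.smul_apply, smul_eq_mul]
  have hFne : F w₀ ≠ 0 := (hFpos w₀ hw₀).ne'
  refine ⟨?_, ?_, ?_⟩
  · -- first goal: gradient of log Z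
    rw [hasGradientAt_iff_hasFDerivAt]
    have hL : HasFDerivAt (fun w => Real.log (F w))
        ((F w₀)⁻¹ • ∫ θ, g w₀ θ • innerSL ℝ (f θ) ∂P) w₀ := by
      simpa [Function.comp_def] using
        (Real.hasDerivAt_log hFne).comp_hasFDerivAt w₀ hFd
    have heq : (fun w => Real.log (Z w).toReal) =ᶠ[nhds w₀]
        fun w => Real.log (F w) := by
      filter_upwards [Metric.ball_mem_nhds w₀ εpos] with w hw
      rw [hZF w hw]
    refine HasFDerivAt.congr_of_eventuallyEq ?_ heq
    refine hL.congr_fderiv (Eq.symm ?_)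
    apply ContinuousLinearMap.ext; intro v
    rw [InnerProductSpace.toDual_apply_apply, key w₀ hw₀, real_inner_smul_left]
    have h1 : ⟪V w₀, v⟫ = ∫ θ, ⟪g w₀ θ • f θ, v⟫ ∂P := by
      have h1a := integral_inner (𝕜 := ℝ) (hIgf w₀ hw₀) v
      rw [real_inner_comm]
      show ⟪v, ∫ θ, g w₀ θ • f θ ∂P⟫ = _
      rw [← h1a]
      exact integral_congr_ae
        (Filter.Eventually.of_forall fun θ => real_inner_comm _ _)
    rw [h1]
    have h2 : ((F w₀)⁻¹ • ∫ θ, g w₀ θ • innerSL ℝ (f θ) ∂P) v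
        = (F w₀)⁻¹ * ∫ θ, (g w₀ θ • innerSL ℝ (f θ)) v ∂P := by
      rw [ContinuousLinearMap.smul_apply, ContinuousLinearMap.integral_apply hIF₁,
        smul_eq_mul]
    rw [h2]
    congr 1
    refine integral_congr_ae (Filter.Eventually.of_forall fun θ => ?_)
    show ⟪g w₀ θ • f θ, v⟫ = (g w₀ θ • innerSL ℝ (f θ)) v
    rw [real_inner_smul_left, ContinuousLinearMap.smul_apply, innerSL_apply_apply,
      smul_eq_mul]
  · -- second goal: derivative of the gradient map
    have hinv : HasFDerivAt (fun w => (F w)⁻¹)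
        ((-(F w₀ ^ 2)⁻¹) • ∫ θ, g w₀ θ • innerSL ℝ (f θ) ∂P) w₀ := by
      simpa [Function.comp_def] using
        (hasDerivAt_inv hFne).comp_hasFDerivAt w₀ hFd
    have hqd := hinv.smul hVd
    have heq2 : (fun w => ∫ θ, f θ ∂(Pw w)) =ᶠ[nhds w₀]
        fun w => (F w)⁻¹ • V w := by
      filter_upwards [Metric.ball_mem_nhds w₀ εpos] with w hw
      exact key w hw
    refine HasFDerivAt.congr_of_eventuallyEq ?_ heq2
    refine hqd.congr_fderiv (Eq.symm ?_)
    -- identify the derivative with the covariance matrix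
    apply ContinuousLinearMap.coe_injective
    apply Module.Basis.ext (PiLp.basisFun 2 ℝ (Fin n))
    intro i
    have hbasis : PiLp.basisFun 2 ℝ (Fin n) i = EuclideanSpace.single i 1 := by
      rw [PiLp.basisFun_apply]
    rw [hbasis]
    -- more integrability
    have hIgfif : ∀ i, Integrable (fun θ => (g w₀ θ * f θ i) • f θ) P := by
      intro i
      have hm : AEStronglyMeasurable (fun θ => (g w₀ θ * f θ i) • f θ) P :=
        hcomp (fun v => (Real.exp ⟪w₀, v⟫ * v i) • v)
          (((hgc w₀).mul (hprojc i)).smul continuous_id)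
      refine Integrable.mono' (hG.const_mul 1) hm ?_
      filter_upwards [hbounds] with θ h
      rw [norm_smul, Real.norm_eq_abs, abs_mul, abs_of_pos (hgpos w₀ θ), one_mul]
      calc g w₀ θ * |f θ i| * ‖f θ‖ ≤ g w₀ θ * ‖f θ‖ * ‖f θ‖ := by
            apply mul_le_mul_of_nonneg_right _ (norm_nonneg _)
            exact mul_le_mul_of_nonneg_left (habs θ i) (hgpos w₀ θ).le
        _ = g w₀ θ * ‖f θ‖ ^ 2 := by ring
        _ ≤ G θ := (h w₀ hw₀).2.2
    -- evaluating the two integral operators on basis vectors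
    have hA1i : ∀ i, (∫ θ, g w₀ θ • innerSL ℝ (f θ) ∂P) (EuclideanSpace.single i 1)
        = J i := by
      intro i
      rw [ContinuousLinearMap.integral_apply hIF₁]
      refine integral_congr_ae (Filter.Eventually.of_forall fun θ => ?_)
      show (g w₀ θ • innerSL ℝ (f θ)) (EuclideanSpace.single i 1) = g w₀ θ * f θ i
      rw [ContinuousLinearMap.smul_apply, innerSL_apply_apply,
        EuclideanSpace.inner_single_right]
      simp [smul_eq_mul]
    have hA2i : ∀ i, (∫ θ, (g w₀ θ • innerSL ℝ (f θ)).smulRight (f θ) ∂P)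
        (EuclideanSpace.single i 1) = ∫ θ, (g w₀ θ * f θ i) • f θ ∂P := by
      intro i
      rw [ContinuousLinearMap.integral_apply hIF₂]
      refine integral_congr_ae (Filter.Eventually.of_forall fun θ => ?_)
      show ((g w₀ θ • innerSL ℝ (f θ)).smulRight (f θ)) (EuclideanSpace.single i 1)
          = (g w₀ θ * f θ i) • f θ
      rw [ContinuousLinearMap.smulRight_apply, ContinuousLinearMap.smul_apply,
        innerSL_apply_apply, EuclideanSpace.inner_single_right]
      simp [smul_smul]
    have hA2ij : ∀ i j, (∫ θ, (g w₀ θ * f θ i) • f θ ∂P) j = I i j := by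
      intro i j
      have h2 : (∫ θ, (g w₀ θ * f θ i) • f θ ∂P) j
          = ∫ θ, ((g w₀ θ * f θ i) • f θ) j ∂P :=
        ((EuclideanSpace.proj (𝕜 := ℝ) j).integral_comp_comm (hIgfif i)).symm
      rw [h2]
      refine integral_congr_ae (Filter.Eventually.of_forall fun θ => ?_)
      show ((g w₀ θ * f θ i) • f θ) j = g w₀ θ * (f θ i * f θ j)
      rw [PiLp.smul_apply, smul_eq_mul]; ring
    show (Matrix.toEuclideanLin M) (EuclideanSpace.single i 1)
        = ((F w₀)⁻¹ • (∫ θ, (g w₀ θ • innerSL ℝ (f θ)).smulRight (f θ) ∂P)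
          + ((-(F w₀ ^ 2)⁻¹) • ∫ θ, g w₀ θ • innerSL ℝ (f θ) ∂P).smulRight (V w₀))
          (EuclideanSpace.single i 1)
    refine PiLp.ext fun j => ?_
    have hLHS : (Matrix.toEuclideanLin M (EuclideanSpace.single i 1)) j = M j i := by
      rw [Matrix.toEuclideanLin_apply]
      have hss : (EuclideanSpace.single i 1 : EuclideanSpace ℝ (Fin n)).ofLp
          = Pi.single i 1 := rfl
      rw [hss, Matrix.mulVec_single]
      show M j i * 1 = M j i
      rw [mul_one]
    have hRHS : (((F w₀)⁻¹ • (∫ θ, (g w₀ θ • innerSL ℝ (f θ)).smulRight (f θ) ∂P)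
          + ((-(F w₀ ^ 2)⁻¹) • ∫ θ, g w₀ θ • innerSL ℝ (f θ) ∂P).smulRight (V w₀))
          (EuclideanSpace.single i 1)) j
        = (F w₀)⁻¹ * I i j + ((-(F w₀ ^ 2)⁻¹) * J i) * J j := by
      rw [ContinuousLinearMap.add_apply, ContinuousLinearMap.smul_apply,
        ContinuousLinearMap.smulRight_apply, ContinuousLinearMap.smul_apply,
        hA1i i, hA2i i, PiLp.add_apply, PiLp.smul_apply, PiLp.smul_apply,
        hA2ij i j, hVj j, smul_eq_mul, smul_eq_mul, smul_eq_mul]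
    rw [hLHS, hRHS, hM' j i, hIsym j i]
    field_simp
    ring
  · -- third goal: positive semidefiniteness
    rw [Matrix.posSemidef_iff_dotProduct_mulVec]
    constructor
    · -- Hermitian
      ext i j
      simp only [Matrix.conjTranspose_apply, star_trivial]
      rw [hM' j i, hM' i j, hIsym j i]; ring
    · intro x
      set C : ℝ := ∑ i, |x i| with hCdef
      have hxG : (0:ℝ) ≤ C := Finset.sum_nonneg fun i _ => abs_nonneg _
      set s : Θ → ℝ := fun θ => ∑ i, x i * f θ i with hsdef
      have hsbound : ∀ θ, |s θ| ≤ C * ‖f θ‖ := by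
        intro θ
        calc |s θ| ≤ ∑ i, |x i * f θ i| := Finset.abs_sum_le_sum_abs _ _
          _ ≤ ∑ i, |x i| * ‖f θ‖ := by
              refine Finset.sum_le_sum fun i _ => ?_
              rw [abs_mul]
              exact mul_le_mul_of_nonneg_left (habs θ i) (abs_nonneg _)
          _ = C * ‖f θ‖ := by rw [← Finset.sum_mul]
      have hscont : Continuous fun v : EuclideanSpace ℝ (Fin n) => ∑ i, x i * v i :=
        continuous_finset_sum _ fun i _ => continuous_const.mul (hprojc i)
      have hIgs : Integrable (fun θ => g w₀ θ * s θ) P := by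
        refine hIntG C _ (hcomp (fun v => Real.exp ⟪w₀, v⟫ * ∑ i, x i * v i)
          ((hgc w₀).mul hscont)) ?_
        filter_upwards [hbounds] with θ h
        rw [abs_mul, abs_of_pos (hgpos w₀ θ)]
        calc g w₀ θ * |s θ| ≤ g w₀ θ * (C * ‖f θ‖) :=
              mul_le_mul_of_nonneg_left (hsbound θ) (hgpos w₀ θ).le
          _ = C * (g w₀ θ * ‖f θ‖) := by ring
          _ ≤ C * G θ := mul_le_mul_of_nonneg_left (h w₀ hw₀).2.1 hxG
      have hIgs2 : Integrable (fun θ => g w₀ θ * s θ ^ 2) P := by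
        refine hIntG (C ^ 2) _
          (hcomp (fun v => Real.exp ⟪w₀, v⟫ * (∑ i, x i * v i) ^ 2)
            ((hgc w₀).mul (hscont.pow 2))) ?_
        filter_upwards [hbounds] with θ h
        rw [abs_mul, abs_of_pos (hgpos w₀ θ), abs_pow]
        calc g w₀ θ * |s θ| ^ 2 ≤ g w₀ θ * (C * ‖f θ‖) ^ 2 := by
              apply mul_le_mul_of_nonneg_left _ (hgpos w₀ θ).le
              exact pow_le_pow_left₀ (abs_nonneg _) (hsbound θ) 2
          _ = C ^ 2 * (g w₀ θ * ‖f θ‖ ^ 2) := by ring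
          _ ≤ C ^ 2 * G θ :=
              mul_le_mul_of_nonneg_left (h w₀ hw₀).2.2 (pow_nonneg hxG 2)
      set A : ℝ := ∫ θ, g w₀ θ * s θ ∂P with hAdef
      set B : ℝ := ∫ θ, g w₀ θ * s θ ^ 2 ∂P with hBdef
      have hA : A = ∑ i, x i * J i := by
        have hpt : (fun θ => g w₀ θ * s θ)
            = fun θ => ∑ i, x i * (g w₀ θ * f θ i) := by
          funext θ
          rw [hsdef, Finset.mul_sum]
          exact Finset.sum_congr rfl fun i _ => by ring
        rw [hAdef, hpt, integral_finset_sum _ fun i _ => (hIgfi i).const_mul (x i)]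
        exact Finset.sum_congr rfl fun i _ => integral_const_mul _ _
      have hB : B = ∑ j, ∑ i, (x j * x i) * I j i := by
        have hpt : (fun θ => g w₀ θ * s θ ^ 2)
            = fun θ => ∑ j, ∑ i, (x j * x i) * (g w₀ θ * (f θ j * f θ i)) := by
          funext θ
          rw [hsdef, sq, Finset.sum_mul_sum, Finset.mul_sum]
          refine Finset.sum_congr rfl fun j _ => ?_
          rw [Finset.mul_sum]
          exact Finset.sum_congr rfl fun i _ => by ring
        rw [hBdef, hpt, integral_finset_sum _ fun j _ =>
          integrable_finset_sum _ fun i _ => (hIgfij j i).const_mul _]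
        refine Finset.sum_congr rfl fun j _ => ?_
        rw [integral_finset_sum _ fun i _ => (hIgfij j i).const_mul _]
        exact Finset.sum_congr rfl fun i _ => integral_const_mul _ _
      have hQF : dotProduct (star x) (M.mulVec x)
          = (F w₀)⁻¹ * B - ((F w₀)⁻¹ * A) ^ 2 := by
        have e1 : dotProduct (star x) (M.mulVec x)
            = ∑ j, ∑ i, x j * (M j i * x i) := by
          simp [dotProduct, Matrix.mulVec, Finset.mul_sum]
        have e2 : ∀ j, ∑ i, x j * (M j i * x i)
            = (F w₀)⁻¹ * (∑ i, (x j * x i) * I j i)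
              - ((F w₀)⁻¹ * (x j * J j)) * ((F w₀)⁻¹ * ∑ i, x i * J i) := by
          intro j
          rw [Finset.mul_sum, Finset.mul_sum, Finset.mul_sum]
          rw [← Finset.sum_sub_distrib]
          refine Finset.sum_congr rfl fun i _ => ?_
          rw [hM' j i]; ring
        rw [e1, hB, hA]
        rw [Finset.sum_congr rfl fun j _ => e2 j, Finset.sum_sub_distrib,
          ← Finset.mul_sum, ← Finset.sum_mul]
        have e3 : ∑ j, (F w₀)⁻¹ * (x j * J j) = (F w₀)⁻¹ * ∑ j, x j * J j := by
          rw [Finset.mul_sum]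
        rw [e3]; ring
      rw [hQF]
      set m : ℝ := (F w₀)⁻¹ * A with hmdef
      have hvar : ∫ θ, g w₀ θ * (s θ - m) ^ 2 ∂P = B - 2 * m * A + m ^ 2 * F w₀ := by
        have hpt : (fun θ => g w₀ θ * (s θ - m) ^ 2)
            = fun θ => (g w₀ θ * s θ ^ 2 - (2 * m) * (g w₀ θ * s θ))
              + m ^ 2 * g w₀ θ := funext fun θ => by ring
        have hint1 : Integrable
            (fun θ => g w₀ θ * s θ ^ 2 - 2 * m * (g w₀ θ * s θ)) P :=
          hIgs2.sub (hIgs.const_mul (2 * m))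
        have hint2 : Integrable (fun θ => m ^ 2 * g w₀ θ) P :=
          (hIg w₀ hw₀).const_mul (m ^ 2)
        rw [hpt, integral_add hint1 hint2,
          integral_sub hIgs2 (hIgs.const_mul (2 * m)), integral_const_mul,
          integral_const_mul]
      have hnn : 0 ≤ ∫ θ, g w₀ θ * (s θ - m) ^ 2 ∂P :=
        integral_nonneg fun θ => mul_nonneg (hgpos w₀ θ).le (sq_nonneg _)
      have hfinal : (F w₀)⁻¹ * B - ((F w₀)⁻¹ * A) ^ 2
          = (F w₀)⁻¹ * (B - 2 * m * A + m ^ 2 * F w₀) := by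
        rw [hmdef]
        field_simp
        ring
      rw [hfinal, ← hvar]
      exact mul_nonneg (inv_nonneg.mpr (hFpos w₀ hw₀).le) hnn
end

section
/- (Proposition 3) Gradient of the reverse KL divergence: fix w₀ ∈ ℝⁿ with 0 < Z(w₀) < ∞, let π_A be a probability measure on Θ such that π ≪ π_A with density r = dπ/dπ_A, and set h = log r. Assume (i) there is a neighborhood U of w₀ and a π-integrable G with (1 + |h(θ)|)·exp(⟪w, f(θ)⟫)·(1 + ‖f(θ)‖ + ‖f(θ)‖²) ≤ G(θ) for all w ∈ U and π-a.e. θ, and (ii) ∫ ‖f‖² dπ_{w₀} < ∞ and ∫ |h|·(1+‖f‖) dπ_{w₀} < ∞. Then w ↦ KL(π_w ‖ π_A) is differentiable at w₀ with gradient equal to Cov_{π_{w₀}}(f, ⟪w₀, f⟫) + E_{π_{w₀}}[h·f] − E_{π_{w₀}}[f]·E_{π_{w₀}}[h], where Cov_{π_{w₀}}(f, ⟪w₀, f⟫) denotes the vector with i-th entry ∫ fᵢ·⟪w₀,f⟫ dπ_{w₀} − (∫ fᵢ dπ_{w₀})(∫ ⟪w₀,f⟫ dπ_{w₀}). -/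
open MeasureTheory Real
open scoped ENNReal RealInnerProductSpace BigOperators

set_option maxHeartbeats 2000000
set_option synthInstance.maxHeartbeats 1000000

section auxlemmas

variable {n : ℕ}

lemma aux_inner_hasFDerivAt (v w : EuclideanSpace ℝ (Fin n)) :
    HasFDerivAt (fun u : EuclideanSpace ℝ (Fin n) => ⟪u, v⟫) (innerSL ℝ v) w := by
  have : (fun u : EuclideanSpace ℝ (Fin n) => ⟪u, v⟫) = fun u => innerSL ℝ v u := by
    funext u
    simp [real_inner_comm]
  rw [this]
  exact (innerSL ℝ v).hasFDerivAt

lemma aux_exp_hasFDerivAt (v w : EuclideanSpace ℝ (Fin n)) :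
    HasFDerivAt (fun u : EuclideanSpace ℝ (Fin n) => Real.exp ⟪u, v⟫)
      (Real.exp ⟪w, v⟫ • innerSL ℝ v) w :=
  (aux_inner_hasFDerivAt v w).exp

lemma aux_mul_hasFDerivAt (v : EuclideanSpace ℝ (Fin n)) (c : ℝ) (w : EuclideanSpace ℝ (Fin n)) :
    HasFDerivAt (fun u : EuclideanSpace ℝ (Fin n) => (⟪u, v⟫ + c) * Real.exp ⟪u, v⟫)
      (((1 + ⟪w, v⟫ + c) * Real.exp ⟪w, v⟫) • innerSL ℝ v) w := by
  have h1 : HasFDerivAt (fun u : EuclideanSpace ℝ (Fin n) => ⟪u, v⟫ + c) (innerSL ℝ v) w :=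
    (aux_inner_hasFDerivAt v w).add_const c
  have h2 := h1.mul (aux_exp_hasFDerivAt v w)
  refine h2.congr_fderiv ?_
  rw [smul_smul, ← add_smul]
  congr 1
  ring

lemma aux_integrable_of_le_const_mul {α F' : Type*} [MeasurableSpace α] {μ : Measure α}
    [NormedAddCommGroup F'] {G : α → ℝ} (hG : Integrable G μ) (C : ℝ) {q : α → F'}
    (hq : AEStronglyMeasurable q μ) (hb : ∀ᵐ x ∂μ, ‖q x‖ ≤ C * G x) : Integrable q μ :=
  (hG.const_mul C).mono' hq hb

lemma aux_bound1 {A B X C gv t : ℝ} (hA : 0 ≤ A) (hB : 0 ≤ B) (hX : 0 < X)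
    (hC : 1 ≤ C) (hg : (1 + A) * X * (1 + B + B ^ 2) ≤ gv) (ht : |t| ≤ 1 + C * B + A) :
    |t| * X * B ≤ C * gv := by
  have h1 : (1 + C * B + A) * B ≤ C * ((1 + A) * (1 + B + B ^ 2)) := by
    nlinarith [mul_nonneg (sub_nonneg.mpr hC) hB, mul_nonneg (mul_nonneg (sub_nonneg.mpr hC) hA) hB,
      mul_nonneg (mul_nonneg (mul_nonneg (by linarith : (0:ℝ) ≤ C) hA) hB) hB, mul_nonneg hA hB]
  calc |t| * X * B = (|t| * B) * X := by ring
    _ ≤ ((1 + C * B + A) * B) * X := by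
        have : |t| * B ≤ (1 + C * B + A) * B := mul_le_mul_of_nonneg_right ht hB
        exact mul_le_mul_of_nonneg_right this hX.le
    _ ≤ (C * ((1 + A) * (1 + B + B ^ 2))) * X := mul_le_mul_of_nonneg_right h1 hX.le
    _ = C * ((1 + A) * X * (1 + B + B ^ 2)) := by ring
    _ ≤ C * gv := mul_le_mul_of_nonneg_left hg (by linarith)

lemma aux_bound2 {A B X C gv t : ℝ} (hA : 0 ≤ A) (hB : 0 ≤ B) (hX : 0 < X)
    (hC : 1 ≤ C) (hg : (1 + A) * X * (1 + B + B ^ 2) ≤ gv) (ht : |t| ≤ C * ((1 + A) * (1 + B))) :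
    |t| * X ≤ C * gv := by
  have h1 : C * ((1 + A) * (1 + B)) * X ≤ C * ((1 + A) * X * (1 + B + B ^ 2)) := by
    nlinarith [mul_nonneg (mul_nonneg (mul_nonneg (by linarith : (0:ℝ) ≤ C)
      (by linarith : (0:ℝ) ≤ 1 + A)) hX.le) (sq_nonneg B)]
  calc |t| * X ≤ (C * ((1 + A) * (1 + B))) * X := mul_le_mul_of_nonneg_right ht hX.le
    _ ≤ C * ((1 + A) * X * (1 + B + B ^ 2)) := h1
    _ ≤ C * gv := mul_le_mul_of_nonneg_left hg (by linarith)

lemma aux_final_vec (gD gA gB : EuclideanSpace ℝ (Fin n)) (a b d : ℝ) (hd : d ≠ 0) :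
    d⁻¹ • gA - (d⁻¹ * a) • (d⁻¹ • gD) + d⁻¹ • gB - (d⁻¹ * b) • (d⁻¹ • gD)
      = (a + b) • (-(d ^ 2)⁻¹ • gD) + d⁻¹ • (gD + gA + gB) - d⁻¹ • gD := by
  match_scalars <;> field_simp <;> ring

end auxlemmas

/-- Proposition 3: gradient of the reverse KL divergence. With
`r = dP/dPA`, `h = log r`, and under the stated domination and integrability
conditions, `w ↦ KL(P_w ‖ PA)` (written as `∫ log (dP_w/dPA) dP_w`) is
differentiable at `w₀` with gradient
`Cov_{P_{w₀}}(f, ⟪w₀, f⟫) + E_{P_{w₀}}[h • f] − E_{P_{w₀}}[h] • E_{P_{w₀}}[f]`,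
where `Cov_{P_{w₀}}(f, ⟪w₀, f⟫) = ∫ ⟪w₀, f⟫ • f dP_{w₀}
− (∫ ⟪w₀, f⟫ dP_{w₀}) • ∫ f dP_{w₀}`. -/
theorem gradient_reverse_KL {n : ℕ} {Θ : Type*} [MeasurableSpace Θ]
    (P : Measure Θ) [IsProbabilityMeasure P]
    (f : Θ → EuclideanSpace ℝ (Fin n)) (hf : Measurable f)
    (Z : EuclideanSpace ℝ (Fin n) → ℝ≥0∞)
    (hZ : ∀ w, Z w = ∫⁻ θ, ENNReal.ofReal (Real.exp ⟪w, f θ⟫) ∂P)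
    (Pw : EuclideanSpace ℝ (Fin n) → Measure Θ)
    (hPw : ∀ w, Pw w = P.withDensity fun θ =>
      ENNReal.ofReal (Real.exp ⟪w, f θ⟫ / (Z w).toReal))
    (w₀ : EuclideanSpace ℝ (Fin n)) (hpos : 0 < Z w₀) (hfin : Z w₀ < ⊤)
    (PA : Measure Θ) [IsProbabilityMeasure PA] (hac : P ≪ PA)
    (r h : Θ → ℝ) (hr : ∀ᵐ θ ∂P, r θ = (P.rnDeriv PA θ).toReal)
    (hh : ∀ᵐ θ ∂P, h θ = Real.log (r θ))
    (U : Set (EuclideanSpace ℝ (Fin n))) (hU : U ∈ nhds w₀)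
    (G : Θ → ℝ) (hG : Integrable G P)
    (hdom : ∀ w ∈ U, ∀ᵐ θ ∂P,
      (1 + |h θ|) * Real.exp ⟪w, f θ⟫ * (1 + ‖f θ‖ + ‖f θ‖ ^ 2) ≤ G θ)
    (hf2 : Integrable (fun θ => ‖f θ‖ ^ 2) (Pw w₀))
    (hhf : Integrable (fun θ => |h θ| * (1 + ‖f θ‖)) (Pw w₀)) :
    HasGradientAt
      (fun w => ∫ θ, Real.log (((Pw w).rnDeriv PA θ).toReal) ∂(Pw w))
      (((∫ θ, ⟪w₀, f θ⟫ • f θ ∂(Pw w₀)) -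
          (∫ θ, ⟪w₀, f θ⟫ ∂(Pw w₀)) • ∫ θ, f θ ∂(Pw w₀)) +
        (∫ θ, h θ • f θ ∂(Pw w₀)) -
          (∫ θ, h θ ∂(Pw w₀)) • ∫ θ, f θ ∂(Pw w₀)) w₀ := by
  classical
  have hw₀U : w₀ ∈ U := mem_of_mem_nhds hU
  have hinner : ∀ w : EuclideanSpace ℝ (Fin n), Measurable fun θ => ⟪w, f θ⟫ :=
    fun w => (Continuous.inner continuous_const continuous_id).measurable.comp hf
  have hme : ∀ w : EuclideanSpace ℝ (Fin n), Measurable fun θ => Real.exp ⟪w, f θ⟫ :=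
    fun w => Real.measurable_exp.comp (hinner w)
  have hhh0 : h =ᵐ[P] fun θ => Real.log ((P.rnDeriv PA θ).toReal) := by
    filter_upwards [hh, hr] with θ h1 h2
    rw [h1, h2]
  have hmh : AEStronglyMeasurable h P :=
    ((Real.measurable_log.comp
      ((Measure.measurable_rnDeriv P PA).ennreal_toReal)).aestronglyMeasurable).congr hhh0.symm
  -- integrability of the exponential weight, for every w ∈ U
  have hIexp : ∀ w ∈ U, Integrable (fun θ => Real.exp ⟪w, f θ⟫) P := by
    intro w hw
    refine aux_integrable_of_le_const_mul hG 1 (hme w).aestronglyMeasurable ?_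
    filter_upwards [hdom w hw] with θ hθ
    rw [Real.norm_eq_abs, abs_of_pos (Real.exp_pos _)]
    have hb1 : |(1:ℝ)| ≤ 1 * ((1 + |h θ|) * (1 + ‖f θ‖)) := by
      rw [abs_one, one_mul]
      nlinarith [abs_nonneg (h θ), norm_nonneg (f θ),
        mul_nonneg (abs_nonneg (h θ)) (norm_nonneg (f θ))]
    have := aux_bound2 (abs_nonneg (h θ)) (norm_nonneg (f θ)) (Real.exp_pos ⟪w, f θ⟫)
      le_rfl hθ hb1
    simpa using this
  have hZD : ∀ w : EuclideanSpace ℝ (Fin n), (Z w).toReal = ∫ θ, Real.exp ⟪w, f θ⟫ ∂P := by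
    intro w
    rw [hZ w, ← integral_eq_lintegral_of_nonneg_ae (ae_of_all _ fun θ => (Real.exp_pos _).le)
      (hme w).aestronglyMeasurable]
  have hPwt : ∀ w : EuclideanSpace ℝ (Fin n), Pw w = P.tilted fun θ => ⟪w, f θ⟫ := by
    intro w
    rw [hPw w, Measure.tilted]
    congr 1
    funext θ
    rw [hZD w]
  have hD0 : 0 < ∫ θ, Real.exp ⟪w₀, f θ⟫ ∂P := integral_exp_pos (hIexp w₀ hw₀U)
  have hC₀ : (1:ℝ) ≤ 1 + ‖w₀‖ := by linarith [norm_nonneg w₀]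
  -- choose a ball inside U, and upgrade the domination to an a.e.-∀w statement
  obtain ⟨ε, εpos, hball⟩ := Metric.mem_nhds_iff.mp hU
  obtain ⟨dset, hdc, hdd⟩ := TopologicalSpace.exists_countable_dense (EuclideanSpace ℝ (Fin n))
  have hdom' : ∀ᵐ θ ∂P, ∀ w ∈ Metric.ball w₀ ε,
      (1 + |h θ|) * Real.exp ⟪w, f θ⟫ * (1 + ‖f θ‖ + ‖f θ‖ ^ 2) ≤ G θ := by
    set s₀ := dset ∩ Metric.ball w₀ ε with hs₀def
    have hs₀c : s₀.Countable := hdc.mono Set.inter_subset_left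
    have hs₀U : s₀ ⊆ U := Set.inter_subset_right.trans hball
    have hsub : Metric.ball w₀ ε ⊆ closure s₀ := by
      have h0 : Metric.ball w₀ ε ⊆ closure (Metric.ball w₀ ε ∩ dset) :=
        hdd.open_subset_closure_inter Metric.isOpen_ball
      simpa [hs₀def, Set.inter_comm] using h0
    have hae : ∀ᵐ θ ∂P, ∀ w ∈ s₀,
        (1 + |h θ|) * Real.exp ⟪w, f θ⟫ * (1 + ‖f θ‖ + ‖f θ‖ ^ 2) ≤ G θ :=
      (ae_ball_iff hs₀c).mpr fun w hw => hdom w (hs₀U hw)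
    filter_upwards [hae] with θ hθ
    intro w hw
    have hcl : closure s₀ ⊆ {w : EuclideanSpace ℝ (Fin n) |
        (1 + |h θ|) * Real.exp ⟪w, f θ⟫ * (1 + ‖f θ‖ + ‖f θ‖ ^ 2) ≤ G θ} := by
      refine closure_minimal hθ ?_
      refine isClosed_le ?_ continuous_const
      exact (continuous_const.mul (Real.continuous_exp.comp
        (Continuous.inner continuous_id continuous_const))).mul continuous_const
    exact hcl (hsub hw)
  -- integrability helpers at w₀
  have keyV : ∀ (C : ℝ), 1 ≤ C → ∀ (t : Θ → ℝ), AEStronglyMeasurable t P →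
      (∀ᵐ θ ∂P, |t θ| ≤ 1 + C * ‖f θ‖ + |h θ|) →
      Integrable (fun θ => (t θ * Real.exp ⟪w₀, f θ⟫) • f θ) P := by
    intro C hC t ht hbd
    refine aux_integrable_of_le_const_mul hG C
      ((ht.mul (hme w₀).aestronglyMeasurable).smul hf.aestronglyMeasurable) ?_
    filter_upwards [hdom w₀ hw₀U, hbd] with θ h1 h2
    rw [norm_smul, Real.norm_eq_abs, abs_mul, abs_of_pos (Real.exp_pos _)]
    exact aux_bound1 (abs_nonneg _) (norm_nonneg _) (Real.exp_pos _) hC h1 h2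
  have keyS : ∀ (C : ℝ), 1 ≤ C → ∀ (t : Θ → ℝ), AEStronglyMeasurable t P →
      (∀ᵐ θ ∂P, |t θ| ≤ C * ((1 + |h θ|) * (1 + ‖f θ‖))) →
      Integrable (fun θ => t θ * Real.exp ⟪w₀, f θ⟫) P := by
    intro C hC t ht hbd
    refine aux_integrable_of_le_const_mul hG C (ht.mul (hme w₀).aestronglyMeasurable) ?_
    filter_upwards [hdom w₀ hw₀U, hbd] with θ h1 h2
    rw [Real.norm_eq_abs, abs_mul, abs_of_pos (Real.exp_pos _)]
    exact aux_bound2 (abs_nonneg _) (norm_nonneg _) (Real.exp_pos _) hC h1 h2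
  have I_Df : Integrable (fun θ => Real.exp ⟪w₀, f θ⟫ • f θ) P := by
    have := keyV 1 le_rfl (fun _ => 1) aestronglyMeasurable_const
      (ae_of_all _ fun θ => by
        rw [abs_one]
        nlinarith [norm_nonneg (f θ), abs_nonneg (h θ)])
    simpa using this
  have I_gA : Integrable (fun θ => (⟪w₀, f θ⟫ * Real.exp ⟪w₀, f θ⟫) • f θ) P := by
    refine keyV (1 + ‖w₀‖) hC₀ _ (hinner w₀).aestronglyMeasurable (ae_of_all _ fun θ => ?_)
    nlinarith [abs_real_inner_le_norm w₀ (f θ), norm_nonneg (f θ), abs_nonneg (h θ),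
      norm_nonneg w₀]
  have I_gB : Integrable (fun θ => (h θ * Real.exp ⟪w₀, f θ⟫) • f θ) P := by
    refine keyV 1 le_rfl h hmh (ae_of_all _ fun θ => ?_)
    nlinarith [norm_nonneg (f θ), abs_nonneg (h θ)]
  have I_gN : Integrable (fun θ => ((1 + ⟪w₀, f θ⟫ + h θ) * Real.exp ⟪w₀, f θ⟫) • f θ) P := by
    refine keyV (1 + ‖w₀‖) hC₀ _
      (((hinner w₀).const_add 1).aestronglyMeasurable.add hmh) (ae_of_all _ fun θ => ?_)
    have h3 : |⟪w₀, f θ⟫| ≤ ‖w₀‖ * ‖f θ‖ := abs_real_inner_le_norm w₀ (f θ)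
    have h4 := abs_add_le (1 + ⟪w₀, f θ⟫) (h θ)
    have h5 := abs_add_le (1:ℝ) ⟪w₀, f θ⟫
    have h7 : |(1:ℝ)| = 1 := abs_one
    nlinarith [norm_nonneg (f θ), abs_nonneg (h θ), norm_nonneg w₀]
  have I_a : Integrable (fun θ => ⟪w₀, f θ⟫ * Real.exp ⟪w₀, f θ⟫) P := by
    refine keyS (1 + ‖w₀‖) hC₀ _ (hinner w₀).aestronglyMeasurable (ae_of_all _ fun θ => ?_)
    nlinarith [abs_real_inner_le_norm w₀ (f θ), norm_nonneg (f θ), abs_nonneg (h θ),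
      norm_nonneg w₀, mul_nonneg (abs_nonneg (h θ)) (norm_nonneg (f θ))]
  have I_b : Integrable (fun θ => h θ * Real.exp ⟪w₀, f θ⟫) P := by
    refine keyS 1 le_rfl h hmh (ae_of_all _ fun θ => ?_)
    nlinarith [norm_nonneg (f θ), abs_nonneg (h θ),
      mul_nonneg (abs_nonneg (h θ)) (norm_nonneg (f θ))]
  have I_N : Integrable (fun θ => (⟪w₀, f θ⟫ + h θ) * Real.exp ⟪w₀, f θ⟫) P := by
    refine keyS (1 + ‖w₀‖) hC₀ _ ((hinner w₀).aestronglyMeasurable.add hmh)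
      (ae_of_all _ fun θ => ?_)
    have h3 : |⟪w₀, f θ⟫| ≤ ‖w₀‖ * ‖f θ‖ := abs_real_inner_le_norm w₀ (f θ)
    have h4 := abs_add_le ⟪w₀, f θ⟫ (h θ)
    nlinarith [norm_nonneg (f θ), abs_nonneg (h θ), norm_nonneg w₀,
      mul_nonneg (abs_nonneg (h θ)) (norm_nonneg (f θ))]
  -- measurability of f as a map to the dual
  have hfd : AEStronglyMeasurable (fun θ => innerSL ℝ (f θ)) P :=
    (innerSL ℝ).continuous.comp_aestronglyMeasurable hf.aestronglyMeasurable
  -- derivative of the denominator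
  have hD' : HasFDerivAt (fun w : EuclideanSpace ℝ (Fin n) => ∫ θ, Real.exp ⟪w, f θ⟫ ∂P)
      (∫ θ, Real.exp ⟪w₀, f θ⟫ • innerSL ℝ (f θ) ∂P) w₀ := by
    refine hasFDerivAt_integral_of_dominated_of_fderiv_le
      (F' := fun w θ => Real.exp ⟪w, f θ⟫ • innerSL ℝ (f θ)) (bound := G) (Metric.ball_mem_nhds w₀ εpos)
      (Filter.Eventually.of_forall fun w => (hme w).aestronglyMeasurable)
      (hIexp w₀ hw₀U) (((hme w₀).aestronglyMeasurable).smul hfd) ?_ hG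
      (Filter.Eventually.of_forall fun θ w _ => aux_exp_hasFDerivAt (f θ) w)
    filter_upwards [hdom'] with θ hθ
    intro w hw
    rw [norm_smul (Real.exp ⟪w, f θ⟫) (innerSL ℝ (f θ)), innerSL_apply_norm,
      Real.norm_eq_abs, abs_of_pos (Real.exp_pos _)]
    have hb1 : |(1:ℝ)| ≤ 1 + 1 * ‖f θ‖ + |h θ| := by
      rw [abs_one]
      nlinarith [abs_nonneg (h θ), norm_nonneg (f θ)]
    have := aux_bound1 (abs_nonneg (h θ)) (norm_nonneg (f θ)) (Real.exp_pos ⟪w, f θ⟫)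
      le_rfl (hθ w hw) hb1
    simpa using this
  -- derivative of the numerator
  have hN' : HasFDerivAt
      (fun w : EuclideanSpace ℝ (Fin n) => ∫ θ, (⟪w, f θ⟫ + h θ) * Real.exp ⟪w, f θ⟫ ∂P)
      (∫ θ, ((1 + ⟪w₀, f θ⟫ + h θ) * Real.exp ⟪w₀, f θ⟫) • innerSL ℝ (f θ) ∂P) w₀ := by
    refine hasFDerivAt_integral_of_dominated_of_fderiv_le
      (F' := fun w θ => ((1 + ⟪w, f θ⟫ + h θ) * Real.exp ⟪w, f θ⟫) • innerSL ℝ (f θ))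
      (bound := fun θ => (1 + ‖w₀‖ + ε) * G θ) (Metric.ball_mem_nhds w₀ εpos)
      (Filter.Eventually.of_forall fun w =>
        ((hinner w).aestronglyMeasurable.add hmh).mul (hme w).aestronglyMeasurable)
      I_N
      (((((hinner w₀).const_add 1).aestronglyMeasurable.add hmh).mul
        (hme w₀).aestronglyMeasurable).smul hfd) ?_ (hG.const_mul _)
      (Filter.Eventually.of_forall fun θ w _ => aux_mul_hasFDerivAt (f θ) (h θ) w)
    filter_upwards [hdom'] with θ hθ
    intro w hw
    rw [norm_smul ((1 + ⟪w, f θ⟫ + h θ) * Real.exp ⟪w, f θ⟫) (innerSL ℝ (f θ)),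
      innerSL_apply_norm, Real.norm_eq_abs, abs_mul, abs_of_pos (Real.exp_pos _)]
    have hwn : ‖w‖ ≤ ‖w₀‖ + ε := by
      have h1 := Metric.mem_ball.mp hw
      have h2 : ‖w‖ - ‖w₀‖ ≤ ‖w - w₀‖ := norm_sub_norm_le w w₀
      rw [dist_eq_norm] at h1
      linarith
    have ht : |1 + ⟪w, f θ⟫ + h θ| ≤ 1 + (1 + ‖w₀‖ + ε) * ‖f θ‖ + |h θ| := by
      have h3 : |⟪w, f θ⟫| ≤ ‖w‖ * ‖f θ‖ := abs_real_inner_le_norm w (f θ)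
      have h4 := abs_add_le (1 + ⟪w, f θ⟫) (h θ)
      have h5 := abs_add_le (1:ℝ) ⟪w, f θ⟫
      have h7 : |(1:ℝ)| = 1 := abs_one
      nlinarith [norm_nonneg (f θ), abs_nonneg (h θ), norm_nonneg w]
    exact aux_bound1 (abs_nonneg _) (norm_nonneg _) (Real.exp_pos _)
      (by linarith [norm_nonneg w₀, εpos.le]) (hθ w hw) ht
  -- assemble the derivative of Φ = N/D - log D
  have hinv : HasFDerivAt (fun w : EuclideanSpace ℝ (Fin n) =>
        (∫ θ, Real.exp ⟪w, f θ⟫ ∂P)⁻¹)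
      ((-((∫ θ, Real.exp ⟪w₀, f θ⟫ ∂P) ^ 2)⁻¹) • (∫ θ, Real.exp ⟪w₀, f θ⟫ • innerSL ℝ (f θ) ∂P))
      w₀ := (hasDerivAt_inv hD0.ne').comp_hasFDerivAt w₀ hD'
  have hlog : HasFDerivAt (fun w : EuclideanSpace ℝ (Fin n) =>
        Real.log (∫ θ, Real.exp ⟪w, f θ⟫ ∂P))
      ((∫ θ, Real.exp ⟪w₀, f θ⟫ ∂P)⁻¹ • (∫ θ, Real.exp ⟪w₀, f θ⟫ • innerSL ℝ (f θ) ∂P)) w₀ :=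
    hD'.log hD0.ne'
  have hΦ : HasFDerivAt (fun w : EuclideanSpace ℝ (Fin n) =>
        (∫ θ, (⟪w, f θ⟫ + h θ) * Real.exp ⟪w, f θ⟫ ∂P) * (∫ θ, Real.exp ⟪w, f θ⟫ ∂P)⁻¹
          - Real.log (∫ θ, Real.exp ⟪w, f θ⟫ ∂P))
      ((∫ θ, (⟪w₀, f θ⟫ + h θ) * Real.exp ⟪w₀, f θ⟫ ∂P) •
          ((-((∫ θ, Real.exp ⟪w₀, f θ⟫ ∂P) ^ 2)⁻¹) •
            (∫ θ, Real.exp ⟪w₀, f θ⟫ • innerSL ℝ (f θ) ∂P))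
        + (∫ θ, Real.exp ⟪w₀, f θ⟫ ∂P)⁻¹ •
            (∫ θ, ((1 + ⟪w₀, f θ⟫ + h θ) * Real.exp ⟪w₀, f θ⟫) • innerSL ℝ (f θ) ∂P)
        - (∫ θ, Real.exp ⟪w₀, f θ⟫ ∂P)⁻¹ •
            (∫ θ, Real.exp ⟪w₀, f θ⟫ • innerSL ℝ (f θ) ∂P)) w₀ :=
    (hN'.mul hinv).sub hlog
  -- the function coincides with Φ on U
  have hFΦ : Set.EqOn (fun w => ∫ θ, Real.log (((Pw w).rnDeriv PA θ).toReal) ∂(Pw w))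
      (fun w : EuclideanSpace ℝ (Fin n) =>
        (∫ θ, (⟪w, f θ⟫ + h θ) * Real.exp ⟪w, f θ⟫ ∂P) * (∫ θ, Real.exp ⟪w, f θ⟫ ∂P)⁻¹
          - Real.log (∫ θ, Real.exp ⟪w, f θ⟫ ∂P)) U := by
    intro w hw
    simp only
    have hIw := hIexp w hw
    have hDw : 0 < ∫ θ, Real.exp ⟪w, f θ⟫ ∂P := integral_exp_pos hIw
    haveI hprob : IsProbabilityMeasure (P.tilted fun θ => ⟪w, f θ⟫) :=
      isProbabilityMeasure_tilted hIw
    have hacw : (P.tilted fun θ => ⟪w, f θ⟫) ≪ P := tilted_absolutelyContinuous P _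
    have hXint : Integrable (fun θ => ⟪w, f θ⟫ + h θ) (P.tilted fun θ => ⟪w, f θ⟫) := by
      rw [Measure.tilted, integrable_withDensity_iff_integrable_smul'
        (((hme w).div_const _).ennreal_ofReal)
        (ae_of_all _ fun θ => ENNReal.ofReal_lt_top)]
      refine aux_integrable_of_le_const_mul hG ((∫ θ, Real.exp ⟪w, f θ⟫ ∂P)⁻¹ * (1 + ‖w‖))
        ((((hme w).div_const _).ennreal_ofReal.ennreal_toReal.aestronglyMeasurable).smul
          ((hinner w).aestronglyMeasurable.add hmh)) ?_
      filter_upwards [hdom w hw] with θ h1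
      rw [smul_eq_mul, ENNReal.toReal_ofReal (by positivity)]
      rw [Real.norm_eq_abs, abs_mul,
        abs_of_pos (by positivity : 0 < Real.exp ⟪w, f θ⟫ / ∫ θ, Real.exp ⟪w, f θ⟫ ∂P)]
      have h2 : |⟪w, f θ⟫ + h θ| * Real.exp ⟪w, f θ⟫ ≤ (1 + ‖w‖) * G θ := by
        refine aux_bound2 (abs_nonneg _) (norm_nonneg _) (Real.exp_pos _)
          (by linarith [norm_nonneg w]) h1 ?_
        have h3 : |⟪w, f θ⟫| ≤ ‖w‖ * ‖f θ‖ := abs_real_inner_le_norm w (f θ)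
        have h4 := abs_add_le ⟪w, f θ⟫ (h θ)
        nlinarith [norm_nonneg (f θ), abs_nonneg (h θ), norm_nonneg w,
          mul_nonneg (abs_nonneg (h θ)) (norm_nonneg (f θ))]
      calc Real.exp ⟪w, f θ⟫ / (∫ θ, Real.exp ⟪w, f θ⟫ ∂P) * |⟪w, f θ⟫ + h θ|
          = (∫ θ, Real.exp ⟪w, f θ⟫ ∂P)⁻¹ * (|⟪w, f θ⟫ + h θ| * Real.exp ⟪w, f θ⟫) := by ring
        _ ≤ (∫ θ, Real.exp ⟪w, f θ⟫ ∂P)⁻¹ * ((1 + ‖w‖) * G θ) :=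
            mul_le_mul_of_nonneg_left h2 (by positivity)
        _ = (∫ θ, Real.exp ⟪w, f θ⟫ ∂P)⁻¹ * (1 + ‖w‖) * G θ := by ring
    have h1 : (fun θ => Real.log (((P.tilted fun θ => ⟪w, f θ⟫).rnDeriv PA θ).toReal))
        =ᵐ[P.tilted fun θ => ⟪w, f θ⟫]
        fun θ => ⟪w, f θ⟫ + h θ - Real.log (∫ θ, Real.exp ⟪w, f θ⟫ ∂P) := by
      have e1 := toReal_rnDeriv_tilted_left P (ν := PA) (f := fun θ => ⟪w, f θ⟫)
        (hinner w).aemeasurable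
      have e1' := e1.filter_mono (hacw.trans hac).ae_le
      have p1 : ∀ᵐ θ ∂P, 0 < P.rnDeriv PA θ := Measure.rnDeriv_pos hac
      have p2 : ∀ᵐ θ ∂P, P.rnDeriv PA θ < ⊤ := hac.ae_le (Measure.rnDeriv_lt_top P PA)
      have e2 := (((p1.and p2).and hhh0).filter_mono hacw.ae_le)
      filter_upwards [e1', e2] with θ q1 q2
      obtain ⟨⟨q2a, q2b⟩, q3⟩ := q2
      rw [q1, Real.log_mul (by positivity) (ENNReal.toReal_pos q2a.ne' q2b.ne).ne',
        Real.log_div (Real.exp_ne_zero _) hDw.ne', Real.log_exp, q3]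
      ring
    rw [hPwt w, integral_congr_ae h1, integral_sub hXint (integrable_const _), integral_const]
    simp only [measure_univ, ENNReal.toReal_one, probReal_univ, smul_eq_mul, one_mul]
    congr 1
    rw [integral_tilted]
    have e4 : ∀ θ, (Real.exp ⟪w, f θ⟫ / ∫ θ, Real.exp ⟪w, f θ⟫ ∂P) • (⟪w, f θ⟫ + h θ)
        = (∫ θ, Real.exp ⟪w, f θ⟫ ∂P)⁻¹ * ((⟪w, f θ⟫ + h θ) * Real.exp ⟪w, f θ⟫) := fun θ => by
      rw [smul_eq_mul]; ring
    rw [integral_congr_ae (ae_of_all _ e4), integral_const_mul, mul_comm]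
  -- rewrite the gradient vector in terms of P-integrals
  have e_f : (∫ θ, f θ ∂(Pw w₀))
      = (∫ θ, Real.exp ⟪w₀, f θ⟫ ∂P)⁻¹ • ∫ θ, Real.exp ⟪w₀, f θ⟫ • f θ ∂P := by
    rw [hPwt w₀, integral_tilted]
    have : ∀ θ, (Real.exp ⟪w₀, f θ⟫ / ∫ θ, Real.exp ⟪w₀, f θ⟫ ∂P) • f θ
        = (∫ θ, Real.exp ⟪w₀, f θ⟫ ∂P)⁻¹ • (Real.exp ⟪w₀, f θ⟫ • f θ) := fun θ => by
      match_scalars; ring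
    rw [integral_congr_ae (ae_of_all _ this), integral_smul]
  have e_sf : (∫ θ, ⟪w₀, f θ⟫ • f θ ∂(Pw w₀))
      = (∫ θ, Real.exp ⟪w₀, f θ⟫ ∂P)⁻¹ •
        ∫ θ, (⟪w₀, f θ⟫ * Real.exp ⟪w₀, f θ⟫) • f θ ∂P := by
    rw [hPwt w₀, integral_tilted]
    have : ∀ θ, (Real.exp ⟪w₀, f θ⟫ / ∫ θ, Real.exp ⟪w₀, f θ⟫ ∂P) • (⟪w₀, f θ⟫ • f θ)
        = (∫ θ, Real.exp ⟪w₀, f θ⟫ ∂P)⁻¹ •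
          ((⟪w₀, f θ⟫ * Real.exp ⟪w₀, f θ⟫) • f θ) := fun θ => by
      match_scalars; ring
    rw [integral_congr_ae (ae_of_all _ this), integral_smul]
  have e_hf : (∫ θ, h θ • f θ ∂(Pw w₀))
      = (∫ θ, Real.exp ⟪w₀, f θ⟫ ∂P)⁻¹ •
        ∫ θ, (h θ * Real.exp ⟪w₀, f θ⟫) • f θ ∂P := by
    rw [hPwt w₀, integral_tilted]
    have : ∀ θ, (Real.exp ⟪w₀, f θ⟫ / ∫ θ, Real.exp ⟪w₀, f θ⟫ ∂P) • (h θ • f θ)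
        = (∫ θ, Real.exp ⟪w₀, f θ⟫ ∂P)⁻¹ •
          ((h θ * Real.exp ⟪w₀, f θ⟫) • f θ) := fun θ => by
      match_scalars; ring
    rw [integral_congr_ae (ae_of_all _ this), integral_smul]
  have e_s : (∫ θ, ⟪w₀, f θ⟫ ∂(Pw w₀))
      = (∫ θ, Real.exp ⟪w₀, f θ⟫ ∂P)⁻¹ * ∫ θ, ⟪w₀, f θ⟫ * Real.exp ⟪w₀, f θ⟫ ∂P := by
    rw [hPwt w₀, integral_tilted]
    have : ∀ θ, (Real.exp ⟪w₀, f θ⟫ / ∫ θ, Real.exp ⟪w₀, f θ⟫ ∂P) • ⟪w₀, f θ⟫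
        = (∫ θ, Real.exp ⟪w₀, f θ⟫ ∂P)⁻¹ * (⟪w₀, f θ⟫ * Real.exp ⟪w₀, f θ⟫) := fun θ => by
      rw [smul_eq_mul]; ring
    rw [integral_congr_ae (ae_of_all _ this), integral_const_mul]
  have e_h : (∫ θ, h θ ∂(Pw w₀))
      = (∫ θ, Real.exp ⟪w₀, f θ⟫ ∂P)⁻¹ * ∫ θ, h θ * Real.exp ⟪w₀, f θ⟫ ∂P := by
    rw [hPwt w₀, integral_tilted]
    have : ∀ θ, (Real.exp ⟪w₀, f θ⟫ / ∫ θ, Real.exp ⟪w₀, f θ⟫ ∂P) • h θ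
        = (∫ θ, Real.exp ⟪w₀, f θ⟫ ∂P)⁻¹ * (h θ * Real.exp ⟪w₀, f θ⟫) := fun θ => by
      rw [smul_eq_mul]; ring
    rw [integral_congr_ae (ae_of_all _ this), integral_const_mul]
  -- splitting lemmas
  have hN₀ : (∫ θ, (⟪w₀, f θ⟫ + h θ) * Real.exp ⟪w₀, f θ⟫ ∂P)
      = (∫ θ, ⟪w₀, f θ⟫ * Real.exp ⟪w₀, f θ⟫ ∂P) + ∫ θ, h θ * Real.exp ⟪w₀, f θ⟫ ∂P := by
    rw [← integral_add I_a I_b]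
    exact integral_congr_ae (ae_of_all _ fun θ => by ring)
  have hgN : (∫ θ, ((1 + ⟪w₀, f θ⟫ + h θ) * Real.exp ⟪w₀, f θ⟫) • f θ ∂P)
      = ((∫ θ, Real.exp ⟪w₀, f θ⟫ • f θ ∂P) + ∫ θ, (⟪w₀, f θ⟫ * Real.exp ⟪w₀, f θ⟫) • f θ ∂P)
        + ∫ θ, (h θ * Real.exp ⟪w₀, f θ⟫) • f θ ∂P := by
    have e5 : (fun θ => ((1 + ⟪w₀, f θ⟫ + h θ) * Real.exp ⟪w₀, f θ⟫) • f θ)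
        = fun θ => (Real.exp ⟪w₀, f θ⟫ • f θ + (⟪w₀, f θ⟫ * Real.exp ⟪w₀, f θ⟫) • f θ)
          + (h θ * Real.exp ⟪w₀, f θ⟫) • f θ := by
      funext θ
      match_scalars; ring
    have I_DgA : Integrable (fun θ => Real.exp ⟪w₀, f θ⟫ • f θ
        + (⟪w₀, f θ⟫ * Real.exp ⟪w₀, f θ⟫) • f θ) P := I_Df.add I_gA
    rw [e5, integral_add I_DgA I_gB, integral_add I_Df I_gA]
  -- express the CLM-valued integrals through innerSL
  have hLD' : (∫ θ, Real.exp ⟪w₀, f θ⟫ • innerSL ℝ (f θ) ∂P)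
      = innerSL ℝ (∫ θ, Real.exp ⟪w₀, f θ⟫ • f θ ∂P) := by
    rw [← ContinuousLinearMap.integral_comp_comm (innerSL ℝ) I_Df]
    exact integral_congr_ae (ae_of_all _ fun θ => (_root_.map_smul (innerSL ℝ) _ _).symm)
  have hLN' : (∫ θ, ((1 + ⟪w₀, f θ⟫ + h θ) * Real.exp ⟪w₀, f θ⟫) • innerSL ℝ (f θ) ∂P)
      = innerSL ℝ (∫ θ, ((1 + ⟪w₀, f θ⟫ + h θ) * Real.exp ⟪w₀, f θ⟫) • f θ ∂P) := by
    rw [← ContinuousLinearMap.integral_comp_comm (innerSL ℝ) I_gN]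
    exact integral_congr_ae (ae_of_all _ fun θ => (_root_.map_smul (innerSL ℝ) _ _).symm)
  -- final assembly
  rw [hasGradientAt_iff_hasFDerivAt]
  refine HasFDerivAt.congr_of_eventuallyEq ?_ (Filter.eventuallyEq_of_mem hU hFΦ)
  have htd : (InnerProductSpace.toDual ℝ (EuclideanSpace ℝ (Fin n)))
        (((∫ θ, ⟪w₀, f θ⟫ • f θ ∂(Pw w₀)) -
          (∫ θ, ⟪w₀, f θ⟫ ∂(Pw w₀)) • ∫ θ, f θ ∂(Pw w₀)) +
        (∫ θ, h θ • f θ ∂(Pw w₀)) -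
          (∫ θ, h θ ∂(Pw w₀)) • ∫ θ, f θ ∂(Pw w₀))
      = ((∫ θ, (⟪w₀, f θ⟫ + h θ) * Real.exp ⟪w₀, f θ⟫ ∂P) •
          ((-((∫ θ, Real.exp ⟪w₀, f θ⟫ ∂P) ^ 2)⁻¹) •
            (∫ θ, Real.exp ⟪w₀, f θ⟫ • innerSL ℝ (f θ) ∂P))
        + (∫ θ, Real.exp ⟪w₀, f θ⟫ ∂P)⁻¹ •
            (∫ θ, ((1 + ⟪w₀, f θ⟫ + h θ) * Real.exp ⟪w₀, f θ⟫) • innerSL ℝ (f θ) ∂P)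
        - (∫ θ, Real.exp ⟪w₀, f θ⟫ ∂P)⁻¹ •
            (∫ θ, Real.exp ⟪w₀, f θ⟫ • innerSL ℝ (f θ) ∂P)) := by
    rw [e_sf, e_s, e_f, e_hf, e_h, hN₀, hLD', hLN', hgN]
    rw [aux_final_vec _ _ _ _ _ _ hD0.ne']
    have : ∀ x : EuclideanSpace ℝ (Fin n),
        (InnerProductSpace.toDual ℝ (EuclideanSpace ℝ (Fin n))) x = innerSL ℝ x := fun x => by
      ext y
      simp [InnerProductSpace.toDual_apply_apply]
    rw [this]
    simp only [map_add, map_sub, _root_.map_smul]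
  rw [htd]
  exact hΦ
end

section
/- (Proposition 4) Optimality of the constrained rounding procedure: let B ∈ ℤ_{≥0}, L ∈ ℤ_{≥1}, let W = { w ∈ ℝⁿ : 0 ≤ wᵢ ≤ L for all i, and ∑ᵢ |wᵢ − 1| ≤ B }, and let w ∈ W. Define Δᵢ = |wᵢ − 1|, εᵢ = Δᵢ − ⌊Δᵢ⌋, and N_max = B − ∑ᵢ ⌊Δᵢ⌋. Define αᵢ ∈ {0,1} as follows: if the number of indices with εᵢ > 1/2 is at most N_max, set αᵢ = 1 exactly when εᵢ > 1/2; otherwise set αᵢ = 1 on a set of N_max indices having the largest values of εᵢ (and αᵢ = 0 elsewhere). Define w*ᵢ = 1 + sign(wᵢ − 1)(⌊Δᵢ⌋ + αᵢ), with the convention sign(0) = 1. Then w* ∈ ℤⁿ ∩ W and w* minimizes ‖w' − w‖₂² over all w' ∈ ℤⁿ ∩ W. -/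
open scoped BigOperators
open Finset

lemma topsum_aux {n : ℕ} (g : Fin n → ℝ) (S T : Finset (Fin n)) (D : ℤ) (hD : 0 ≤ D)
    (hg0 : ∀ i, 0 ≤ g i) (hg1 : ∀ i, g i ≤ 1)
    (htop : ∀ i ∈ S, ∀ j ∉ S, g j ≤ g i)
    (hcard : (T.card : ℤ) ≤ (S.card : ℤ) + D) :
    ∑ i ∈ T, g i ≤ (D : ℝ) + ∑ i ∈ S, g i := by
  have hsd : ∑ i ∈ T \ S, g i - ∑ i ∈ S \ T, g i = ∑ i ∈ T, g i - ∑ i ∈ S, g i :=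
    Finset.sum_sdiff_sub_sum_sdiff
  have hcard2 : ((T \ S).card : ℤ) ≤ ((S \ T).card : ℤ) + D := by
    have h1 : (T \ S).card + (T ∩ S).card = T.card := Finset.card_sdiff_add_card_inter T S
    have h2 : (S \ T).card + (S ∩ T).card = S.card := Finset.card_sdiff_add_card_inter S T
    have h3 : (T ∩ S).card = (S ∩ T).card := by rw [Finset.inter_comm]
    omega
  have key : ∑ i ∈ T \ S, g i ≤ (D : ℝ) + ∑ i ∈ S \ T, g i := by
    rcases Finset.eq_empty_or_nonempty (S \ T) with h | h
    · have hc : ((T \ S).card : ℤ) ≤ D := by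
        rw [h] at hcard2; simpa using hcard2
      have h0 : (0:ℝ) ≤ ∑ i ∈ S \ T, g i := Finset.sum_nonneg fun i _ => hg0 i
      calc ∑ i ∈ T \ S, g i ≤ (T \ S).card • (1:ℝ) :=
            Finset.sum_le_card_nsmul _ _ _ (fun i _ => hg1 i)
        _ = ((T \ S).card : ℝ) := by simp
        _ ≤ (D:ℝ) := by exact_mod_cast hc
        _ ≤ _ := by linarith
    · obtain ⟨j₀, hj₀, hmin⟩ := Finset.exists_min_image (S \ T) g h
      have hj₀S : j₀ ∈ S := (Finset.mem_sdiff.1 hj₀).1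
      have h1 : ∑ i ∈ T \ S, g i ≤ (T \ S).card • g j₀ :=
        Finset.sum_le_card_nsmul _ _ _
          (fun i hi => htop j₀ hj₀S i (Finset.mem_sdiff.1 hi).2)
      have h2 : (S \ T).card • g j₀ ≤ ∑ i ∈ S \ T, g i :=
        Finset.card_nsmul_le_sum _ _ _ (fun i hi => hmin i hi)
      have hg0' : 0 ≤ g j₀ := hg0 j₀
      have hg1' : g j₀ ≤ 1 := hg1 j₀
      have hcR : ((T \ S).card : ℝ) ≤ ((S \ T).card : ℝ) + (D : ℝ) := by exact_mod_cast hcard2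
      rw [nsmul_eq_mul] at h1 h2
      have hD' : (0:ℝ) ≤ (D:ℝ) := by exact_mod_cast hD
      nlinarith
  linarith

/-- Proposition 4: optimality of the constrained rounding
procedure. With `Δᵢ = |wᵢ − 1|`, `εᵢ = Δᵢ − ⌊Δᵢ⌋`, `N_max = B − ∑⌊Δᵢ⌋`, and
`α ∈ {0,1}ⁿ` chosen by the greedy rule (indicator of `εᵢ > 1/2` when that set
has at most `N_max` elements, otherwise the indicator of a set of `N_max`
indices with the largest `εᵢ`), the vector
`w*ᵢ = 1 + sign(wᵢ − 1)(⌊Δᵢ⌋ + αᵢ)` (sign(0)=1) is an integer vector lying in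
`W` which minimizes `‖w' − w‖₂²` over all integer vectors `w' ∈ W`. -/
theorem constrained_rounding_optimal (n : ℕ) (B L : ℤ) (hB : 0 ≤ B)
    (hL : 1 ≤ L)
    (W : Set (Fin n → ℝ))
    (hW : W = {v | (∀ i, 0 ≤ v i ∧ v i ≤ (L : ℝ)) ∧ ∑ i, |v i - 1| ≤ (B : ℝ)})
    (w : Fin n → ℝ) (hw : w ∈ W)
    (Δ : Fin n → ℝ) (hΔ : ∀ i, Δ i = |w i - 1|)
    (ε : Fin n → ℝ) (hε : ∀ i, ε i = Δ i - ⌊Δ i⌋)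
    (Nmax : ℤ) (hN : Nmax = B - ∑ i, ⌊Δ i⌋)
    (α : Fin n → ℤ)
    (hα₁ : ((Finset.univ.filter fun i => (1 : ℝ) / 2 < ε i).card : ℤ) ≤ Nmax →
      ∀ i, α i = if (1 : ℝ) / 2 < ε i then 1 else 0)
    (hα₂ : ¬ ((Finset.univ.filter fun i => (1 : ℝ) / 2 < ε i).card : ℤ) ≤ Nmax →
      ∃ S : Finset (Fin n), (S.card : ℤ) = Nmax ∧
        (∀ i ∈ S, ∀ j ∉ S, ε j ≤ ε i) ∧ ∀ i, α i = if i ∈ S then 1 else 0)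
    (wstar : Fin n → ℝ)
    (hwstar : ∀ i, wstar i =
      1 + (if 0 ≤ w i - 1 then (1 : ℝ) else -1) * ((⌊Δ i⌋ : ℝ) + (α i : ℝ))) :
    (∀ i, ∃ k : ℤ, wstar i = (k : ℝ)) ∧ wstar ∈ W ∧
      ∀ w' : Fin n → ℝ, (∀ i, ∃ k : ℤ, w' i = (k : ℝ)) → w' ∈ W →
        ∑ i, (wstar i - w i) ^ 2 ≤ ∑ i, (w' i - w i) ^ 2 := by
  have hwW := hw
  rw [hW] at hwW
  obtain ⟨hwb, hwB⟩ := hwW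
  have hΔ0 : ∀ i, 0 ≤ Δ i := fun i => by rw [hΔ i]; exact abs_nonneg _
  have hfl0 : ∀ i, (0:ℤ) ≤ ⌊Δ i⌋ := fun i => Int.floor_nonneg.2 (hΔ0 i)
  have hεlb : ∀ i, 0 ≤ ε i := fun i => by
    rw [hε i]; have := Int.floor_le (Δ i); linarith
  have hεub : ∀ i, ε i < 1 := fun i => by
    rw [hε i]; have := Int.lt_floor_add_one (Δ i); linarith
  have hsΔ : ∀ i, w i - 1 = (if 0 ≤ w i - 1 then (1:ℝ) else -1) * Δ i := by
    intro i; rw [hΔ i]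
    by_cases h : 0 ≤ w i - 1
    · rw [if_pos h, abs_of_nonneg h, one_mul]
    · push_neg at h; rw [if_neg (not_le.2 h), abs_of_neg h]; ring
  -- α properties
  have hkey : (∀ i, α i = 0 ∨ α i = 1) ∧ (∀ i, α i = 1 → 1/2 < ε i) ∧
      ((∑ i, α i : ℤ) ≤ B - ∑ i, ⌊Δ i⌋) := by
    by_cases hc : ((Finset.univ.filter fun i => (1:ℝ)/2 < ε i).card : ℤ) ≤ Nmax
    · have hα := hα₁ hc
      refine ⟨fun i => ?_, fun i hi => ?_, ?_⟩
      · rw [hα i]; split <;> simp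
      · rw [hα i] at hi; split_ifs at hi with h
        · exact h
        · exact absurd hi (by norm_num)
      · have hsum : (∑ i, α i : ℤ) =
            ((Finset.univ.filter fun i => (1:ℝ)/2 < ε i).card : ℤ) := by
          simp [hα, Finset.sum_boole]
        rw [hsum]; rw [hN] at hc; exact hc
    · obtain ⟨S, hScard, hStop, hα⟩ := hα₂ hc
      have hSε : ∀ i ∈ S, 1/2 < ε i := by
        intro i hiS
        have hEx : ∃ j, j ∈ (Finset.univ.filter fun i => (1:ℝ)/2 < ε i) ∧ j ∉ S := by
          by_contra hco; push_neg at hco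
          have hsub : (Finset.univ.filter fun i => (1:ℝ)/2 < ε i) ⊆ S := fun j hj => hco j hj
          have hle := Finset.card_le_card hsub
          have : ((Finset.univ.filter fun i => (1:ℝ)/2 < ε i).card : ℤ) ≤ (S.card : ℤ) := by
            exact_mod_cast hle
          exact hc (hScard ▸ this)
        obtain ⟨j, hjf, hjS⟩ := hEx
        exact lt_of_lt_of_le (Finset.mem_filter.1 hjf).2 (hStop i hiS j hjS)
      refine ⟨fun i => ?_, fun i hi => ?_, ?_⟩
      · rw [hα i]; split <;> simp
      · rw [hα i] at hi; split_ifs at hi with h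
        · exact hSε i h
        · exact absurd hi (by norm_num)
      · have hsum : (∑ i, α i : ℤ) = (S.card : ℤ) := by
          simp only [hα]; rw [Finset.sum_ite_mem, Finset.univ_inter]; simp
        rw [hsum, hScard, hN]
  obtain ⟨hα01, hαε, hαsum⟩ := hkey
  have hα0 : ∀ i, (0:ℤ) ≤ α i := fun i => by rcases hα01 i with h | h <;> simp [h]
  -- integrality
  have hint : ∀ i, ∃ k : ℤ, wstar i = (k : ℝ) := by
    intro i
    refine ⟨1 + (if 0 ≤ w i - 1 then (1:ℤ) else -1) * (⌊Δ i⌋ + α i), ?_⟩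
    rw [hwstar i]; split_ifs <;> push_cast <;> ring
  -- abs values of wstar
  have hm0 : ∀ i, (0:ℝ) ≤ (⌊Δ i⌋ : ℝ) + (α i : ℝ) := by
    intro i
    have h1 : ((0:ℤ):ℝ) ≤ ((⌊Δ i⌋:ℤ):ℝ) := by exact_mod_cast hfl0 i
    have h2 : ((0:ℤ):ℝ) ≤ ((α i:ℤ):ℝ) := by exact_mod_cast hα0 i
    push_cast at h1 h2; linarith
  have habsstar : ∀ i, |wstar i - 1| = (⌊Δ i⌋ : ℝ) + (α i : ℝ) := by
    intro i; rw [hwstar i]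
    split_ifs with h
    · rw [one_mul]; rw [add_sub_cancel_left]; exact abs_of_nonneg (hm0 i)
    · have : 1 + -1 * ((⌊Δ i⌋:ℝ) + α i) - 1 = -((⌊Δ i⌋:ℝ) + α i) := by ring
      rw [this, abs_neg]; exact abs_of_nonneg (hm0 i)
  -- membership
  have hmem : wstar ∈ W := by
    rw [hW]
    constructor
    · intro i
      have hwi := hwb i
      have hfl0' : (0:ℝ) ≤ (⌊Δ i⌋:ℝ) := by exact_mod_cast hfl0 i
      have hflle : (⌊Δ i⌋:ℝ) ≤ Δ i := Int.floor_le _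
      by_cases h : 0 ≤ w i - 1
      · have hΔe : Δ i = w i - 1 := by rw [hΔ i, abs_of_nonneg h]
        rw [hwstar i, if_pos h, one_mul]
        rcases hα01 i with h0 | h1
        · rw [h0]; push_cast
          constructor
          · linarith
          · have hΔL : Δ i ≤ (L:ℝ) - 1 := by rw [hΔe]; linarith [hwi.2]
            linarith
        · have hεpos : (0:ℝ) < ε i := by linarith [hαε i h1]
          have hlt : (⌊Δ i⌋:ℝ) < Δ i := by have := hε i; linarith
          have hΔL : Δ i ≤ (L:ℝ) - 1 := by rw [hΔe]; linarith [hwi.2]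
          have hltL : (⌊Δ i⌋:ℝ) < (L:ℝ) - 1 := by linarith
          have hZ : ⌊Δ i⌋ < L - 1 := by exact_mod_cast (by push_cast; linarith : (⌊Δ i⌋:ℝ) < ((L - 1 : ℤ):ℝ))
          have hZ' : (⌊Δ i⌋:ℝ) ≤ (L:ℝ) - 2 := by
            have : ⌊Δ i⌋ ≤ L - 2 := by omega
            exact_mod_cast (Int.cast_le.mpr this : (⌊Δ i⌋:ℝ) ≤ ((L-2:ℤ):ℝ))
          rw [h1]; push_cast
          constructor <;> linarith
      · push_neg at h
        have hΔe : Δ i = 1 - w i := by rw [hΔ i, abs_of_neg (by linarith : w i - 1 < 0)]; ring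
        have hΔ1 : Δ i ≤ 1 := by rw [hΔe]; linarith [hwi.1]
        have hLR : (1:ℝ) ≤ (L:ℝ) := by exact_mod_cast hL
        rw [hwstar i, if_neg (not_le.2 h)]
        rcases hα01 i with h0 | h1
        · have hfl1 : (⌊Δ i⌋:ℝ) ≤ 1 := by linarith
          rw [h0]; push_cast
          constructor <;> linarith
        · have hεpos : (0:ℝ) < ε i := by linarith [hαε i h1]
          have hlt : (⌊Δ i⌋:ℝ) < Δ i := by have := hε i; linarith
          have hZ : ⌊Δ i⌋ < 1 := by
            exact_mod_cast (by push_cast; linarith : (⌊Δ i⌋:ℝ) < ((1:ℤ):ℝ))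
          have hZ0 : ⌊Δ i⌋ = 0 := le_antisymm (by omega) (hfl0 i)
          rw [h1, hZ0]; push_cast
          constructor <;> linarith
    · have : ∑ i, |wstar i - 1| = ∑ i, ((⌊Δ i⌋:ℝ) + (α i:ℝ)) :=
        Finset.sum_congr rfl fun i _ => habsstar i
      rw [this]
      have hZ : (∑ i, (⌊Δ i⌋ + α i) : ℤ) ≤ B := by
        rw [Finset.sum_add_distrib]; omega
      calc ∑ i, ((⌊Δ i⌋:ℝ) + (α i:ℝ)) = ((∑ i, (⌊Δ i⌋ + α i) : ℤ) : ℝ) := by push_cast; ring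
        _ ≤ (B:ℝ) := by exact_mod_cast hZ
  refine ⟨hint, hmem, ?_⟩
  -- optimality
  set g : Fin n → ℝ := fun i => max 0 (2 * ε i - 1) with hgdef
  have hg0 : ∀ i, 0 ≤ g i := fun i => le_max_left _ _
  have hg1 : ∀ i, g i ≤ 1 := fun i => max_le (by norm_num) (by linarith [hεub i])
  set A : Finset (Fin n) := Finset.univ.filter (fun i => α i = 1) with hAdef
  have hcoststar : ∑ i, (wstar i - w i)^2 = ∑ i, (ε i)^2 - ∑ i ∈ A, g i := by
    have hterm : ∀ i, (wstar i - w i)^2 = (ε i)^2 - (if α i = 1 then g i else 0) := by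
      intro i
      have h1 := hsΔ i
      have h2 := hε i
      have hdiff : wstar i - w i = (if 0 ≤ w i - 1 then (1:ℝ) else -1) * ((α i:ℝ) - ε i) := by
        rw [hwstar i]
        by_cases h : 0 ≤ w i - 1
        · rw [if_pos h] at h1 ⊢; linarith
        · rw [if_neg h] at h1 ⊢; linarith
      rw [hdiff, mul_pow]
      have hs2 : (if 0 ≤ w i - 1 then (1:ℝ) else -1)^2 = 1 := by split_ifs <;> norm_num
      rw [hs2, one_mul]
      rcases hα01 i with h0 | h1
      · rw [h0, if_neg (by norm_num : ¬ (0:ℤ) = 1)]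
        push_cast; ring
      · rw [h1, if_pos rfl]
        have hge : g i = 2 * ε i - 1 := max_eq_right (by linarith [hαε i h1])
        rw [hge]; push_cast; ring
    calc ∑ i, (wstar i - w i)^2 = ∑ i, ((ε i)^2 - (if α i = 1 then g i else 0)) :=
          Finset.sum_congr rfl fun i _ => hterm i
      _ = ∑ i, (ε i)^2 - ∑ i, (if α i = 1 then g i else 0) := Finset.sum_sub_distrib _ _
      _ = ∑ i, (ε i)^2 - ∑ i ∈ A, g i := by rw [hAdef, Finset.sum_filter]
  intro w' hint' hw'W
  rw [hW] at hw'W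
  obtain ⟨hw'b, hw'B⟩ := hw'W
  choose k hk using hint'
  set t : Fin n → ℤ := fun i => (if 0 ≤ w i - 1 then 1 else -1) * (k i - 1) with htdef
  have hst : ∀ i, w' i - 1 = (if 0 ≤ w i - 1 then (1:ℝ) else -1) * (t i : ℝ) := by
    intro i
    by_cases h : 0 ≤ w i - 1
    · simp only [htdef, if_pos h]; push_cast; rw [hk i]; ring
    · simp only [htdef, if_neg h]; push_cast; rw [hk i]; ring
  have habs : ∀ i, ((|t i| : ℤ) : ℝ) = |w' i - 1| := by
    intro i
    have h1 : |if 0 ≤ w i - 1 then (1:ℝ) else -1| = 1 := by split_ifs <;> norm_num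
    rw [Int.cast_abs, hst i, abs_mul, h1, one_mul]
  have hcost' : ∀ i, (w' i - w i)^2 = ((t i:ℝ) - Δ i)^2 := by
    intro i
    have h1 := hsΔ i
    have h2 := hst i
    have hd : w' i - w i = (if 0 ≤ w i - 1 then (1:ℝ) else -1) * ((t i:ℝ) - Δ i) := by
      by_cases h : 0 ≤ w i - 1
      · rw [if_pos h] at h1 h2 ⊢; linarith
      · rw [if_neg h] at h1 h2 ⊢; linarith
    rw [hd, mul_pow]
    have hs2 : (if 0 ≤ w i - 1 then (1:ℝ) else -1)^2 = 1 := by split_ifs <;> norm_num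
    rw [hs2, one_mul]
  have hbud : (∑ i, |t i| : ℤ) ≤ B := by
    have h1 : ((∑ i, |t i| : ℤ):ℝ) = ∑ i, |w' i - 1| := by
      rw [Int.cast_sum]
      exact Finset.sum_congr rfl fun i _ => habs i
    have h2 := hw'B
    rw [← h1] at h2
    exact_mod_cast h2
  set T : Finset (Fin n) := Finset.univ.filter (fun i => ⌊Δ i⌋ + 1 ≤ |t i|) with hTdef
  set Tc : Finset (Fin n) := Finset.univ.filter (fun i => ¬ (⌊Δ i⌋ + 1 ≤ |t i|)) with hTcdef
  set D : ℤ := ∑ i ∈ Tc, (⌊Δ i⌋ - |t i|) with hDdef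
  have hD0 : 0 ≤ D := Finset.sum_nonneg fun i hi => by
    have := (Finset.mem_filter.1 hi).2; omega
  have hTcard : (T.card : ℤ) ≤ (B - ∑ i, ⌊Δ i⌋) + D := by
    have hsplit : ∑ i ∈ T, |t i| + ∑ i ∈ Tc, |t i| = ∑ i, |t i| :=
      Finset.sum_filter_add_sum_filter_not _ _ _
    have hsplit2 : ∑ i ∈ T, ⌊Δ i⌋ + ∑ i ∈ Tc, ⌊Δ i⌋ = ∑ i, ⌊Δ i⌋ :=
      Finset.sum_filter_add_sum_filter_not _ _ _
    have h1 : ∑ i ∈ T, (⌊Δ i⌋ + 1) ≤ ∑ i ∈ T, |t i| :=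
      Finset.sum_le_sum fun i hi => (Finset.mem_filter.1 hi).2
    have h2 : ∑ i ∈ T, (⌊Δ i⌋ + 1) = ∑ i ∈ T, ⌊Δ i⌋ + T.card := by
      rw [Finset.sum_add_distrib]; simp
    have h3 : D = ∑ i ∈ Tc, ⌊Δ i⌋ - ∑ i ∈ Tc, |t i| := by
      rw [hDdef, Finset.sum_sub_distrib]
    omega
  have hptT : ∀ i, (ε i)^2 - g i ≤ ((t i:ℝ) - Δ i)^2 := by
    intro i
    have hεi := hε i
    have hflle : ((⌊Δ i⌋ : ℤ):ℝ) ≤ Δ i := Int.floor_le _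
    rcases le_or_gt (t i) ⌊Δ i⌋ with h | h
    · have hR : (t i:ℝ) ≤ ((⌊Δ i⌋ : ℤ):ℝ) := by exact_mod_cast h
      have h1 : ε i ≤ Δ i - t i := by linarith
      nlinarith [hεlb i, hg0 i]
    · have hR : ((⌊Δ i⌋ : ℤ):ℝ) + 1 ≤ (t i:ℝ) := by exact_mod_cast h
      have h1 : 1 - ε i ≤ (t i:ℝ) - Δ i := by linarith
      have h2 : 0 ≤ 1 - ε i := by linarith [hεub i]
      have h3 : 2*ε i - 1 ≤ g i := le_max_right _ _
      nlinarith
  have hptTc : ∀ i ∈ Tc, (ε i)^2 + (((⌊Δ i⌋ - |t i| : ℤ)):ℝ) ≤ ((t i:ℝ) - Δ i)^2 := by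
    intro i hi
    have hmemi := (Finset.mem_filter.1 hi).2
    have h1 : |t i| ≤ ⌊Δ i⌋ := by omega
    have hd0 : (0:ℤ) ≤ ⌊Δ i⌋ - |t i| := by omega
    have hd0R : (0:ℝ) ≤ (((⌊Δ i⌋ - |t i| : ℤ)):ℝ) := by exact_mod_cast hd0
    have htle : (t i : ℝ) ≤ ((|t i| : ℤ):ℝ) := by exact_mod_cast le_abs_self (t i)
    have he : ((|t i| : ℤ):ℝ) = ((⌊Δ i⌋ : ℤ):ℝ) - (((⌊Δ i⌋ - |t i| : ℤ)):ℝ) := by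
      push_cast; ring
    have hεi := hε i
    have hkey : ε i + (((⌊Δ i⌋ - |t i| : ℤ)):ℝ) ≤ Δ i - t i := by
      rw [he] at htle; linarith
    have hd2 : (((⌊Δ i⌋ - |t i| : ℤ)):ℝ) ≤ (((⌊Δ i⌋ - |t i| : ℤ)):ℝ)^2 := by
      have hcases : (⌊Δ i⌋ - |t i| : ℤ) = 0 ∨ 1 ≤ (⌊Δ i⌋ - |t i| : ℤ) := by omega
      rcases hcases with hc | hc
      · rw [hc]; norm_num
      · have : (1:ℝ) ≤ (((⌊Δ i⌋ - |t i| : ℤ)):ℝ) := by exact_mod_cast hc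
        nlinarith
    nlinarith [hεlb i, hd0R, hkey, hd2]
  have hDcast : (D:ℝ) = ∑ i ∈ Tc, (((⌊Δ i⌋ - |t i| : ℤ)):ℝ) := by
    rw [hDdef, Int.cast_sum]
  have hlow : ∑ i, (ε i)^2 + (D:ℝ) - ∑ i ∈ T, g i ≤ ∑ i, ((t i:ℝ) - Δ i)^2 := by
    have hA1 : ∑ i ∈ T, ((t i:ℝ) - Δ i)^2 + ∑ i ∈ Tc, ((t i:ℝ) - Δ i)^2
        = ∑ i, ((t i:ℝ) - Δ i)^2 := Finset.sum_filter_add_sum_filter_not _ _ _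
    have hA2 : ∑ i ∈ T, (ε i)^2 + ∑ i ∈ Tc, (ε i)^2 = ∑ i, (ε i)^2 :=
      Finset.sum_filter_add_sum_filter_not _ _ _
    have hB1 : ∑ i ∈ T, ((ε i)^2 - g i) ≤ ∑ i ∈ T, ((t i:ℝ) - Δ i)^2 :=
      Finset.sum_le_sum fun i _ => hptT i
    have hB2 : ∑ i ∈ Tc, ((ε i)^2 + (((⌊Δ i⌋ - |t i| : ℤ)):ℝ))
        ≤ ∑ i ∈ Tc, ((t i:ℝ) - Δ i)^2 :=
      Finset.sum_le_sum fun i hi => hptTc i hi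
    rw [Finset.sum_sub_distrib] at hB1
    rw [Finset.sum_add_distrib] at hB2
    rw [hDcast]
    linarith
  have hTbound : ∑ i ∈ T, g i ≤ (D:ℝ) + ∑ i ∈ A, g i := by
    by_cases hc : ((Finset.univ.filter fun i => (1:ℝ)/2 < ε i).card : ℤ) ≤ Nmax
    · have hα := hα₁ hc
      have hzero : ∀ i, i ∉ A → g i = 0 := by
        intro i hiA
        have hnot : ¬ (1:ℝ)/2 < ε i := by
          intro hgt
          exact hiA (by rw [hAdef]; exact Finset.mem_filter.2 ⟨Finset.mem_univ i, by rw [hα i, if_pos hgt]⟩)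
        have hle : ε i ≤ 1/2 := not_lt.1 hnot
        exact max_eq_left (by linarith)
      have h1 : ∑ i ∈ T, g i ≤ ∑ i ∈ A, g i := by
        rw [← Finset.sum_filter_add_sum_filter_not T (fun i => i ∈ A) g]
        have h2 : ∑ i ∈ T.filter (fun i => ¬ i ∈ A), g i = 0 :=
          Finset.sum_eq_zero fun i hi => hzero i (Finset.mem_filter.1 hi).2
        have h3 : ∑ i ∈ T.filter (fun i => i ∈ A), g i ≤ ∑ i ∈ A, g i :=
          Finset.sum_le_sum_of_subset_of_nonneg
            (fun i hi => (Finset.mem_filter.1 hi).2) (fun i _ _ => hg0 i)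
        linarith
      have hD0R : (0:ℝ) ≤ (D:ℝ) := by exact_mod_cast hD0
      linarith
    · obtain ⟨S, hScard, hStop, hα⟩ := hα₂ hc
      have hAS : A = S := by
        rw [hAdef]
        ext i
        simp only [Finset.mem_filter, Finset.mem_univ, true_and, hα i]
        split_ifs with h <;> simp [h]
      rw [hAS]
      refine topsum_aux g S T D hD0 hg0 hg1 ?_ ?_
      · intro i hi j hj
        exact max_le_max le_rfl (by linarith [hStop i hi j hj])
      · rw [hScard, hN]; exact hTcard
  calc ∑ i, (wstar i - w i)^2 = ∑ i, (ε i)^2 - ∑ i ∈ A, g i := hcoststar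
    _ ≤ ∑ i, (ε i)^2 + (D:ℝ) - ∑ i ∈ T, g i := by linarith [hTbound]
    _ ≤ ∑ i, ((t i:ℝ) - Δ i)^2 := hlow
    _ = ∑ i, (w' i - w i)^2 := (Finset.sum_congr rfl fun i _ => (hcost' i)).symm
end

section
/- Minimizers of the rounding problem in α-coordinates are binary: let Δ ∈ ℝⁿ with Δᵢ ≥ 0 for all i, let εᵢ = Δᵢ − ⌊Δᵢ⌋ ∈ [0,1), and let B ∈ ℤ_{≥0} with ∑ᵢ ⌊Δᵢ⌋ ≤ B. Consider the feasible set F = { α ∈ ℤⁿ : ∑ᵢ |⌊Δᵢ⌋ + αᵢ| ≤ B }. Then for every α ∈ F with α ∉ {0,1}ⁿ there exists α̃ ∈ F with ∑ᵢ(εᵢ − α̃ᵢ)² < ∑ᵢ(εᵢ − αᵢ)². Consequently, every minimizer of α ↦ ∑ᵢ(εᵢ − αᵢ)² over F lies in {0,1}ⁿ, and 0 ∈ F (the all-zero vector is feasible). -/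
/-!
Write `x = ⌊Δ⌋ + α`, so that feasibility reads `∑ |xᵢ| ≤ B`. A non-binary feasible `α` always
admits a feasible one- or two-coordinate move that lowers `∑ (εᵢ - αᵢ)²`, because `εᵢ ∈ [0, 1)`:
a coordinate `αⱼ ≥ 2` can be lowered by one, which also lowers `|xⱼ|`. Otherwise some `αⱼ ≤ -1`,
and raising it by one is feasible if some `xₗ < 0` (raise `αₗ` instead, which lowers `|xₗ|`) or if
the budget has slack. If neither holds, every `xᵢ ≥ 0` and `∑ |xᵢ| = B`, so
`∑ αᵢ = B - ∑ ⌊Δᵢ⌋ ≥ 0` forces some `αₖ = 1`; setting `αₖ` to `0` pays for raising `αⱼ`, and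
`(εⱼ - αⱼ - 1)² + εₖ² < (εⱼ - αⱼ)² + (εₖ - 1)²`.
-/

open Finset Function

variable {ι : Type*} [Fintype ι]

def roundingCost (m α : ι → ℤ) : ℤ := ∑ i, |m i + α i|

def roundingError (ε : ι → ℝ) (α : ι → ℤ) : ℝ := ∑ i, (ε i - α i) ^ 2

theorem roundingCost_eq_of_nonneg {m α : ι → ℤ} (h : ∀ i, 0 ≤ m i + α i) :
    roundingCost m α = ∑ i, m i + ∑ i, α i := by
  rw [← sum_add_distrib]
  exact sum_congr rfl fun i _ => abs_of_nonneg (h i)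

variable [DecidableEq ι]

theorem Finset.sum_apply_update_add {β M : Type*} [AddCommMonoid M] (g : ι → β → M)
    (α : ι → β) (j : ι) (v : β) :
    ∑ i, g i (update α j v i) + g j (α j) = ∑ i, g i (α i) + g j v := by
  simp_rw [apply_update g α j v]
  rw [sum_update_of_mem (mem_univ j), sdiff_singleton_eq_erase,
    ← add_sum_erase univ (fun i => g i (α i)) (mem_univ j)]
  ac_rfl

theorem roundingCost_update_add (m α : ι → ℤ) (j : ι) (v : ℤ) :
    roundingCost m (update α j v) + |m j + α j| = roundingCost m α + |m j + v| :=
  sum_apply_update_add (fun i a => |m i + a|) α j v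

theorem roundingError_update_add (ε : ι → ℝ) (α : ι → ℤ) (j : ι) (v : ℤ) :
    roundingError ε (update α j v) + (ε j - α j) ^ 2 = roundingError ε α + (ε j - v) ^ 2 :=
  sum_apply_update_add (fun i (a : ℤ) => (ε i - a) ^ 2) α j v

theorem exists_ne_eq_one_of_sum_nonneg {α : ι → ℤ} {j : ι} (hle : ∀ i, α i ≤ 1)
    (hj : α j < 0) (hsum : 0 ≤ ∑ i, α i) : ∃ k ≠ j, α k = 1 := by
  by_contra! h
  have hrest : ∑ k ∈ univ.erase j, α k ≤ 0 :=
    sum_nonpos fun k hk => by have := hle k; have := h k (ne_of_mem_erase hk); omega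
  have := add_sum_erase univ α (mem_univ j)
  omega

section Improvement

variable {m α : ι → ℤ} {ε : ι → ℝ} {B : ℤ} {j : ι}

theorem roundingError_update_sub_one_lt (hε : ε j ∈ Set.Ico 0 1) (hj : 2 ≤ α j) :
    roundingError ε (update α j (α j - 1)) < roundingError ε α := by
  have hupd := roundingError_update_add ε α j (α j - 1)
  have ha : (2 : ℝ) ≤ α j := by exact_mod_cast hj
  push_cast at hupd
  nlinarith [hε.1, hε.2]

theorem roundingError_update_add_one_lt (hε : ε j ∈ Set.Ico 0 1) (hj : α j < 0) :
    roundingError ε (update α j (α j + 1)) < roundingError ε α := by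
  have hupd := roundingError_update_add ε α j (α j + 1)
  have ha : (α j : ℝ) ≤ -1 := by exact_mod_cast Int.le_sub_one_of_lt hj
  push_cast at hupd
  nlinarith [hε.1, hε.2]

theorem exists_improvement_of_two_le (hε : ε j ∈ Set.Ico 0 1) (hm : 0 ≤ m j)
    (hα : roundingCost m α ≤ B) (hj : 2 ≤ α j) :
    ∃ α', roundingCost m α' ≤ B ∧ roundingError ε α' < roundingError ε α := by
  refine ⟨update α j (α j - 1), ?_, roundingError_update_sub_one_lt hε hj⟩
  have hupd := roundingCost_update_add m α j (α j - 1)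
  rw [abs_of_nonneg (by omega), abs_of_nonneg (by omega)] at hupd
  omega

theorem exists_improvement_of_add_neg (hε : ε j ∈ Set.Ico 0 1) (hm : 0 ≤ m j)
    (hα : roundingCost m α ≤ B) (hj : m j + α j < 0) :
    ∃ α', roundingCost m α' ≤ B ∧ roundingError ε α' < roundingError ε α := by
  refine ⟨update α j (α j + 1), ?_, roundingError_update_add_one_lt hε (by omega)⟩
  have hupd := roundingCost_update_add m α j (α j + 1)
  rw [abs_of_neg hj, abs_of_nonpos (by omega)] at hupd
  omega

theorem exists_improvement_of_lt (hε : ε j ∈ Set.Ico 0 1) (hα : roundingCost m α < B)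
    (hj : α j < 0) :
    ∃ α', roundingCost m α' ≤ B ∧ roundingError ε α' < roundingError ε α := by
  refine ⟨update α j (α j + 1), ?_, roundingError_update_add_one_lt hε hj⟩
  have hupd := roundingCost_update_add m α j (α j + 1)
  have := abs_add_le (m j + α j) 1
  rw [abs_one] at this
  rw [← add_assoc] at hupd
  omega

theorem exists_improvement_of_swap {k : ι} (hεj : ε j ∈ Set.Ico 0 1)
    (hεk : ε k ∈ Set.Ico 0 1) (hm : 0 ≤ m k) (hα : roundingCost m α ≤ B) (hjk : j ≠ k)
    (hj : α j < 0) (hxj : 0 ≤ m j + α j) (hk : α k = 1) :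
    ∃ α', roundingCost m α' ≤ B ∧ roundingError ε α' < roundingError ε α := by
  have hα₁k : update α j (α j + 1) k = 1 := by rw [update_of_ne hjk.symm, hk]
  refine ⟨update (update α j (α j + 1)) k 0, ?_, ?_⟩
  · have hcost₁ := roundingCost_update_add m α j (α j + 1)
    have hcost₂ := roundingCost_update_add m (update α j (α j + 1)) k 0
    rw [abs_of_nonneg hxj, abs_of_nonneg (by omega)] at hcost₁
    rw [hα₁k, abs_of_nonneg (by omega), abs_of_nonneg (by omega)] at hcost₂
    omega
  · have herr₁ := roundingError_update_add ε α j (α j + 1)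
    have herr₂ := roundingError_update_add ε (update α j (α j + 1)) k 0
    have ha : (α j : ℝ) ≤ -1 := by exact_mod_cast Int.le_sub_one_of_lt hj
    rw [hα₁k] at herr₂
    push_cast at herr₁ herr₂
    nlinarith [hεj.1, hεk.2]

theorem exists_improvement_of_not_binary (hm : ∀ i, 0 ≤ m i) (hε : ∀ i, ε i ∈ Set.Ico 0 1)
    (hmB : ∑ i, m i ≤ B) (hα : roundingCost m α ≤ B) (hbin : ¬ ∀ i, α i = 0 ∨ α i = 1) :
    ∃ α', roundingCost m α' ≤ B ∧ roundingError ε α' < roundingError ε α := by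
  by_cases htwo : ∃ i, 2 ≤ α i
  · obtain ⟨i, hi⟩ := htwo
    exact exists_improvement_of_two_le (hε i) (hm i) hα hi
  push Not at htwo hbin
  have hle : ∀ i, α i ≤ 1 := fun i => by have := htwo i; omega
  obtain ⟨j, hj₀, hj₁⟩ := hbin
  have hj : α j < 0 := by have := hle j; omega
  by_cases hneg : ∃ l, m l + α l < 0
  · obtain ⟨l, hl⟩ := hneg
    exact exists_improvement_of_add_neg (hε l) (hm l) hα hl
  push Not at hneg
  rcases hα.lt_or_eq with hslack | htight
  · exact exists_improvement_of_lt (hε j) hslack hj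
  have hsum : 0 ≤ ∑ i, α i := by rw [roundingCost_eq_of_nonneg hneg] at htight; omega
  obtain ⟨k, hkj, hk⟩ := exists_ne_eq_one_of_sum_nonneg hle hj hsum
  exact exists_improvement_of_swap (hε j) (hε k) (hm k) hα hkj.symm hj (hneg j) hk

end Improvement

theorem rounding_minimizers_binary_general (n : ℕ)
    (Δ : Fin n → ℝ) (hΔ : ∀ i, 0 ≤ Δ i)
    (ε : Fin n → ℝ) (hε : ∀ i, ε i = Δ i - ⌊Δ i⌋)
    (B : ℤ) (hsum : ∑ i, ⌊Δ i⌋ ≤ B)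
    (F : Set (Fin n → ℤ)) (hF : F = {α | ∑ i, |⌊Δ i⌋ + α i| ≤ B}) :
    (∀ α ∈ F, ¬ (∀ i, α i = 0 ∨ α i = 1) →
        ∃ α' ∈ F, ∑ i, (ε i - (α' i : ℝ)) ^ 2 < ∑ i, (ε i - (α i : ℝ)) ^ 2) ∧
      (∀ α ∈ F,
        (∀ β ∈ F, ∑ i, (ε i - (α i : ℝ)) ^ 2 ≤ ∑ i, (ε i - (β i : ℝ)) ^ 2) →
        ∀ i, α i = 0 ∨ α i = 1) ∧
      (fun _ : Fin n => (0 : ℤ)) ∈ F := by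
  subst hF
  have hm : ∀ i, 0 ≤ ⌊Δ i⌋ := fun i => Int.floor_nonneg.mpr (hΔ i)
  have hεIco : ∀ i, ε i ∈ Set.Ico 0 1 := fun i => by
    rw [hε i, Int.self_sub_floor]
    exact ⟨Int.fract_nonneg _, Int.fract_lt_one _⟩
  have improve : ∀ α : Fin n → ℤ, roundingCost (⌊Δ ·⌋) α ≤ B →
      ¬ (∀ i, α i = 0 ∨ α i = 1) →
      ∃ α', roundingCost (⌊Δ ·⌋) α' ≤ B ∧ roundingError ε α' < roundingError ε α :=
    fun α hα hbin => exists_improvement_of_not_binary hm hεIco hsum hα hbin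
  refine ⟨improve, fun α hα hmin i => ?_, ?_⟩
  · by_contra hi
    obtain ⟨α', hα', hlt⟩ := improve α hα fun h => hi (h i)
    exact (hmin α' hα').not_gt hlt
  · simpa [abs_of_nonneg (hm _)] using hsum

/-- minimizers of the rounding problem in `α`-coordinates are
binary. With `Δᵢ ≥ 0`, `εᵢ = Δᵢ − ⌊Δᵢ⌋`, `∑⌊Δᵢ⌋ ≤ B`, and feasible set
`F = {α ∈ ℤⁿ : ∑|⌊Δᵢ⌋ + αᵢ| ≤ B}`: every non-binary feasible `α` is strictly
improved by some feasible `α̃`; consequently every minimizer of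
`∑ (εᵢ − αᵢ)²` over `F` lies in `{0,1}ⁿ`; and `0 ∈ F`. -/
theorem rounding_minimizers_binary (n : ℕ)
    (Δ : Fin n → ℝ) (hΔ : ∀ i, 0 ≤ Δ i)
    (ε : Fin n → ℝ) (hε : ∀ i, ε i = Δ i - ⌊Δ i⌋)
    (B : ℤ) (hB : 0 ≤ B) (hsum : ∑ i, ⌊Δ i⌋ ≤ B)
    (F : Set (Fin n → ℤ)) (hF : F = {α | ∑ i, |⌊Δ i⌋ + α i| ≤ B}) :
    (∀ α ∈ F, ¬ (∀ i, α i = 0 ∨ α i = 1) →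
        ∃ α' ∈ F, ∑ i, (ε i - (α' i : ℝ)) ^ 2 < ∑ i, (ε i - (α i : ℝ)) ^ 2) ∧
      (∀ α ∈ F,
        (∀ β ∈ F, ∑ i, (ε i - (α i : ℝ)) ^ 2 ≤ ∑ i, (ε i - (β i : ℝ)) ^ 2) →
        ∀ i, α i = 0 ∨ α i = 1) ∧
      (fun _ : Fin n => (0 : ℤ)) ∈ F :=
  rounding_minimizers_binary_general n Δ hΔ ε hε B hsum F hF
end
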